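/- arXiv:2104.08264 — 5 statements merged into one kernel-verified Lean document; each statement's English description precedes it below -/
import Mathlib

section
/- Let x, y, z be real numbers and, for each integer n ≥ 2, let A^{(n)} be the real symmetric matrix indexed by the 2-element subsets of [n] with entries A^{(n)}_{e,f} = x if e = f, A^{(n)}_{e,f} = y if |e ∩ f| = 1, and A^{(n)}_{e,f} = z if e ∩ f = ∅. Then A^{(n)} is positive semidefinite for every n ≥ 2 if and only if x − 2y + z ≥ 0, z ≥ 0, and y − z ≥ 0. -/
open Finset

/-- The 2-element subsets ("edges") of `[n] = {1,…,n}`, modeled inside `ℕ`. -/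
def edgesN (n : ℕ) : Finset (Finset ℕ) := (Finset.Icc 1 n).powersetCard 2

/-- A matrix indexed by the 2-subsets of `[n]` is positive semidefinite:
its quadratic form over coordinates indexed by `edgesN n` is nonnegative. -/
def QuadPSD (n : ℕ) (A : Finset ℕ → Finset ℕ → ℝ) : Prop :=
  ∀ x : Finset ℕ → ℝ, 0 ≤ ∑ e ∈ edgesN n, ∑ f ∈ edgesN n, x e * A e f * x f

/-- The matrix with entry `x` if `e = f`, `y` if `|e ∩ f| = 1`, and `z` if `e ∩ f = ∅`
(for 2-element subsets `e`, `f`). -/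
def interMat (x y z : ℝ) (e f : Finset ℕ) : ℝ :=
  if e = f then x else if (e ∩ f).card = 1 then y else z

lemma mem_edgesN {n : ℕ} {e : Finset ℕ} : e ∈ edgesN n ↔ e ⊆ Finset.Icc 1 n ∧ e.card = 2 := by
  simp [edgesN, Finset.mem_powersetCard]

lemma interMat_eq {x y z : ℝ} {e f : Finset ℕ} (he : e.card = 2) (hf : f.card = 2) :
    interMat x y z e f
      = (if e = f then (x - 2*y + z) else 0) + (y - z) * ((e ∩ f).card : ℝ) + z := by
  rcases eq_or_ne e f with rfl | hne
  · simp [interMat, he]; ring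
  · have hle : (e ∩ f).card ≤ 2 := le_trans (Finset.card_le_card Finset.inter_subset_left) he.le
    have hne2 : (e ∩ f).card ≠ 2 := by
      intro h
      have h1 : e ∩ f = e := Finset.eq_of_subset_of_card_le Finset.inter_subset_left (by omega)
      have h2 : e ⊆ f := h1 ▸ Finset.inter_subset_right
      exact hne (Finset.eq_of_subset_of_card_le h2 (by omega))
    interval_cases h : (e ∩ f).card
    · simp [interMat, hne, h]
    · simp [interMat, hne, h]
    · exact absurd rfl hne2

lemma card_inter_eq_sum {n : ℕ} {e f : Finset ℕ} (he : e ⊆ Finset.Icc 1 n) :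
    ((e ∩ f).card : ℝ)
      = ∑ i ∈ Finset.Icc 1 n, (if i ∈ e then (1:ℝ) else 0) * (if i ∈ f then (1:ℝ) else 0) := by
  have h1 : e ∩ f = (Finset.Icc 1 n).filter (fun i => i ∈ e ∧ i ∈ f) := by
    ext i
    simp only [Finset.mem_inter, Finset.mem_filter]
    exact ⟨fun h => ⟨he h.1, h⟩, fun h => h.2⟩
  rw [h1, Finset.card_filter]
  push_cast
  refine Finset.sum_congr rfl fun i _ => ?_
  by_cases h1 : i ∈ e <;> by_cases h2 : i ∈ f <;> simp [h1, h2]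

lemma quad_eq (x y z : ℝ) (n : ℕ) (v : Finset ℕ → ℝ) :
    ∑ e ∈ edgesN n, ∑ f ∈ edgesN n, v e * interMat x y z e f * v f
      = (x - 2*y + z) * ∑ e ∈ edgesN n, (v e)^2
        + (y - z) * ∑ i ∈ Finset.Icc 1 n,
            (∑ e ∈ edgesN n, (if i ∈ e then (1:ℝ) else 0) * v e)^2
        + z * (∑ e ∈ edgesN n, v e)^2 := by
  have key : ∀ e ∈ edgesN n, ∀ f ∈ edgesN n,
      v e * interMat x y z e f * v f
        = (if e = f then (x - 2*y + z) * (v e * v f) else 0)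
          + (y - z) * ∑ i ∈ Finset.Icc 1 n,
              ((if i ∈ e then (1:ℝ) else 0) * v e) * ((if i ∈ f then (1:ℝ) else 0) * v f)
          + z * (v e * v f) := by
    intro e he f hf
    rw [mem_edgesN] at he hf
    rw [interMat_eq he.2 hf.2, card_inter_eq_sum he.1]
    have hS : ∑ i ∈ Finset.Icc 1 n, ((if i ∈ e then (1:ℝ) else 0) * v e) * ((if i ∈ f then (1:ℝ) else 0) * v f)
        = (∑ i ∈ Finset.Icc 1 n, (if i ∈ e then (1:ℝ) else 0) * (if i ∈ f then (1:ℝ) else 0)) * (v e * v f) := by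
      rw [Finset.sum_mul]; exact Finset.sum_congr rfl fun i _ => by ring
    rw [hS]
    rcases eq_or_ne e f with rfl|hne
    · rw [if_pos rfl, if_pos rfl]; ring
    · rw [if_neg hne, if_neg hne]; ring
  rw [Finset.sum_congr rfl (fun e he => Finset.sum_congr rfl (fun f hf => key e he f hf))]
  simp only [Finset.sum_add_distrib]
  congr 1
  · congr 1
    · rw [Finset.mul_sum]
      refine Finset.sum_congr rfl fun e he => ?_
      rw [Finset.sum_ite_eq (edgesN n) e (fun f => (x - 2*y + z) * (v e * v f)), if_pos he]
      ring
    · simp only [← Finset.mul_sum]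
      congr 1
      have hsq : ∀ i : ℕ, (∑ e ∈ edgesN n, (if i ∈ e then (1:ℝ) else 0) * v e)^2
          = ∑ e ∈ edgesN n, ∑ f ∈ edgesN n,
              ((if i ∈ e then (1:ℝ) else 0) * v e) * ((if i ∈ f then (1:ℝ) else 0) * v f) := by
        intro i; rw [sq, Finset.sum_mul_sum]
      simp only [hsq]
      rw [Finset.sum_congr rfl (fun e _ => Finset.sum_comm), Finset.sum_comm]
  · rw [sq, Finset.sum_mul_sum (edgesN n) (edgesN n) v v, Finset.mul_sum]
    refine Finset.sum_congr rfl fun e _ => ?_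
    rw [Finset.mul_sum]

lemma deg_filter {n i : ℕ} (hi : i ∈ Finset.Icc 1 n) :
    (edgesN n).filter (fun e => i ∈ e) = ((Finset.Icc 1 n).erase i).image (fun j => {i, j}) := by
  ext e
  simp only [Finset.mem_filter, mem_edgesN, Finset.mem_image, Finset.mem_erase]
  constructor
  · rintro ⟨⟨hsub, hcard⟩, hie⟩
    obtain ⟨a, b, hab, rfl⟩ := Finset.card_eq_two.mp hcard
    rcases Finset.mem_insert.mp hie with rfl | hb
    · exact ⟨b, ⟨fun h => hab h.symm, hsub (by simp)⟩, rfl⟩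
    · rw [Finset.mem_singleton] at hb; subst hb
      exact ⟨a, ⟨fun h => hab h, hsub (by simp)⟩, by rw [Finset.pair_comm]⟩
  · rintro ⟨j, ⟨hji, hjmem⟩, rfl⟩
    refine ⟨⟨?_, Finset.card_pair (fun h => hji h.symm)⟩, by simp⟩
    simp [Finset.insert_subset_iff, hi, hjmem]

lemma deg_card {n i : ℕ} (hi : i ∈ Finset.Icc 1 n) :
    ((edgesN n).filter (fun e => i ∈ e)).card = n - 1 := by
  rw [deg_filter hi, Finset.card_image_of_injOn, Finset.card_erase_of_mem hi, Nat.card_Icc]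
  · omega
  · intro a ha b hb hab
    rw [Finset.mem_coe, Finset.mem_erase] at ha hb
    have hab' : ({i, a} : Finset ℕ) = {i, b} := hab
    have : a ∈ ({i, b} : Finset ℕ) := hab' ▸ (by simp : a ∈ ({i, a} : Finset ℕ))
    rcases Finset.mem_insert.mp this with h | h
    · exact absurd h ha.1
    · exact Finset.mem_singleton.mp h

lemma deg_sum {n i : ℕ} (hi : i ∈ Finset.Icc 1 n) :
    ∑ e ∈ edgesN n, (if i ∈ e then (1:ℝ) else 0) = (n : ℝ) - 1 := by
  rw [Finset.sum_boole, deg_card hi]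
  have h1 : 1 ≤ n := by
    rw [Finset.mem_Icc] at hi; omega
  push_cast [Nat.cast_sub h1]
  ring

lemma pair_filter {n i j : ℕ} (hi : i ∈ Finset.Icc 1 n) (hj : j ∈ Finset.Icc 1 n) (hij : i ≠ j) :
    (edgesN n).filter (fun e => i ∈ e ∧ j ∈ e) = {({i, j} : Finset ℕ)} := by
  ext e
  simp only [Finset.mem_filter, mem_edgesN, Finset.mem_singleton]
  constructor
  · rintro ⟨⟨hsub, hcard⟩, hie, hje⟩
    have hs : ({i, j} : Finset ℕ) ⊆ e := by
      intro a ha; rcases Finset.mem_insert.mp ha with rfl | h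
      · exact hie
      · exact Finset.mem_singleton.mp h ▸ hje
    exact (Finset.eq_of_subset_of_card_le hs (by rw [hcard, Finset.card_pair hij])).symm
  · rintro rfl
    exact ⟨⟨by simp [Finset.insert_subset_iff, hi, hj], Finset.card_pair hij⟩, by simp, by simp⟩

lemma pair_sum {n i j : ℕ} (hi : i ∈ Finset.Icc 1 n) (hj : j ∈ Finset.Icc 1 n) (hij : i ≠ j) :
    ∑ e ∈ edgesN n, (if i ∈ e then (1:ℝ) else 0) * (if j ∈ e then (1:ℝ) else 0) = 1 := by
  have h : ∀ e : Finset ℕ, (if i ∈ e then (1:ℝ) else 0) * (if j ∈ e then (1:ℝ) else 0)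
      = if i ∈ e ∧ j ∈ e then (1:ℝ) else 0 := by
    intro e; by_cases h1 : i ∈ e <;> by_cases h2 : j ∈ e <;> simp [h1, h2]
  simp only [h]
  rw [Finset.sum_boole, pair_filter hi hj hij]
  simp

lemma edgesN_card (n : ℕ) : ((edgesN n).card : ℝ) = n * (n - 1) / 2 := by
  rw [edgesN, Finset.card_powersetCard, Nat.card_Icc]
  rw [show n + 1 - 1 = n from rfl, Nat.cast_choose_two]

/-- the test vector for `x - 2y + z ≥ 0` (at `n = 4`). -/
def v4 (e : Finset ℕ) : ℝ :=
  if e = {1,2} ∨ e = {3,4} then 1 else if e = {1,3} ∨ e = {2,4} then -1 else 0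

/-- the test vector for `y - z ≥ 0`. -/
def dvec (e : Finset ℕ) : ℝ := (if 1 ∈ e then 1 else 0) - (if 2 ∈ e then 1 else 0)

/-- **Remark 1 (k = 0 case of Theorem 1.3).** The matrices `A^{(n)}` with entries
depending only on the intersection pattern are positive semidefinite for every `n ≥ 2`
iff `x − 2y + z ≥ 0`, `z ≥ 0` and `y − z ≥ 0`. -/
theorem interMat_PSD_iff (x y z : ℝ) :
    (∀ n, 2 ≤ n → QuadPSD n (interMat x y z)) ↔
      (0 ≤ x - 2 * y + z ∧ 0 ≤ z ∧ 0 ≤ y - z) := by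
  constructor
  · intro h
    -- Step 1 : `0 ≤ x - 2y + z` from the `n = 4` test vector.
    have ha : 0 ≤ x - 2*y + z := by
      have h4 := h 4 (by norm_num) v4
      rw [quad_eq] at h4
      have e1 : ∑ e ∈ edgesN 4, (v4 e)^2 = 4 := by
        rw [show edgesN 4 = {{1,2},{1,3},{1,4},{2,3},{2,4},{3,4}} from by decide]
        simp (config := { decide := true }) [Finset.sum_insert, v4]
        norm_num
      have e2 : ∑ i ∈ Finset.Icc 1 4, (∑ e ∈ edgesN 4, (if i ∈ e then (1:ℝ) else 0) * v4 e)^2 = 0 := by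
        rw [show edgesN 4 = {{1,2},{1,3},{1,4},{2,3},{2,4},{3,4}} from by decide,
            show Finset.Icc 1 4 = {1,2,3,4} from by decide]
        simp (config := { decide := true }) [Finset.sum_insert, v4]
      have e3 : ∑ e ∈ edgesN 4, v4 e = 0 := by
        rw [show edgesN 4 = {{1,2},{1,3},{1,4},{2,3},{2,4},{3,4}} from by decide]
        simp (config := { decide := true }) [Finset.sum_insert, v4]
      rw [e1, e2, e3] at h4
      nlinarith [h4]
    -- Step 2 : `0 ≤ y - z` from the difference-of-stars vector for large `n`.
    have hb : 0 ≤ y - z := by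
      by_contra hb
      push_neg at hb
      obtain ⟨m, hm⟩ := exists_nat_gt ((x - 2*y + z) / (-(y-z)))
      set n : ℕ := m + 3 with hn
      have h1n : (1:ℕ) ∈ Finset.Icc 1 n := by rw [Finset.mem_Icc]; omega
      have h2n : (2:ℕ) ∈ Finset.Icc 1 n := by rw [Finset.mem_Icc]; omega
      have hq := h n (by omega) dvec
      rw [quad_eq] at hq
      -- compute the three sums
      have e1 : ∑ e ∈ edgesN n, (dvec e)^2 = 2*(n:ℝ) - 4 := by
        have hpt : ∀ e : Finset ℕ, (dvec e)^2
            = (if 1 ∈ e then (1:ℝ) else 0) + (if 2 ∈ e then (1:ℝ) else 0)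
              - 2*((if 1 ∈ e then (1:ℝ) else 0) * (if 2 ∈ e then (1:ℝ) else 0)) := by
          intro e; unfold dvec; by_cases h1 : 1 ∈ e <;> by_cases h2 : 2 ∈ e <;> simp [h1, h2] <;> ring
        simp only [hpt]
        rw [Finset.sum_sub_distrib, Finset.sum_add_distrib, ← Finset.mul_sum,
            deg_sum h1n, deg_sum h2n, pair_sum h1n h2n (by norm_num)]
        ring
      have e3 : ∑ e ∈ edgesN n, dvec e = 0 := by
        unfold dvec
        rw [Finset.sum_sub_distrib, deg_sum h1n, deg_sum h2n]
        ring
      have e2 : ∑ i ∈ Finset.Icc 1 n, (∑ e ∈ edgesN n, (if i ∈ e then (1:ℝ) else 0) * dvec e)^2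
          = 2*((n:ℝ) - 2)^2 := by
        have hT : ∀ i ∈ Finset.Icc 1 n,
            (∑ e ∈ edgesN n, (if i ∈ e then (1:ℝ) else 0) * dvec e)^2
              = (if i = 1 then ((n:ℝ)-2)^2 else 0) + (if i = 2 then ((n:ℝ)-2)^2 else 0) := by
          intro i hi
          have hsplit : ∑ e ∈ edgesN n, (if i ∈ e then (1:ℝ) else 0) * dvec e
              = ∑ e ∈ edgesN n, (if i ∈ e then (1:ℝ) else 0) * (if 1 ∈ e then (1:ℝ) else 0)
                - ∑ e ∈ edgesN n, (if i ∈ e then (1:ℝ) else 0) * (if 2 ∈ e then (1:ℝ) else 0) := by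
            rw [← Finset.sum_sub_distrib]
            exact Finset.sum_congr rfl fun e _ => by unfold dvec; ring
          by_cases hi1 : i = 1
          · subst hi1
            have hself : ∑ e ∈ edgesN n, (if 1 ∈ e then (1:ℝ) else 0) * (if 1 ∈ e then (1:ℝ) else 0)
                = (n:ℝ) - 1 := by
              rw [Finset.sum_congr rfl (fun e _ => by by_cases h1 : 1 ∈ e <;> simp [h1] :
                ∀ e ∈ edgesN n, (if 1 ∈ e then (1:ℝ) else 0) * (if 1 ∈ e then (1:ℝ) else 0)
                  = (if 1 ∈ e then (1:ℝ) else 0)), deg_sum h1n]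
            rw [hsplit, hself, pair_sum h1n h2n (by norm_num)]
            norm_num
            ring
          · by_cases hi2 : i = 2
            · subst hi2
              have hself : ∑ e ∈ edgesN n, (if 2 ∈ e then (1:ℝ) else 0) * (if 2 ∈ e then (1:ℝ) else 0)
                  = (n:ℝ) - 1 := by
                rw [Finset.sum_congr rfl (fun e _ => by by_cases h1 : 2 ∈ e <;> simp [h1] :
                  ∀ e ∈ edgesN n, (if 2 ∈ e then (1:ℝ) else 0) * (if 2 ∈ e then (1:ℝ) else 0)
                    = (if 2 ∈ e then (1:ℝ) else 0)), deg_sum h2n]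
              rw [hsplit, hself, pair_sum h2n h1n (by norm_num)]
              norm_num
              ring
            · rw [hsplit, pair_sum hi h1n (by omega), pair_sum hi h2n (by omega)]
              simp [hi1, hi2]
        rw [Finset.sum_congr rfl hT, Finset.sum_add_distrib,
            Finset.sum_ite_eq' (Finset.Icc 1 n) 1 (fun _ => ((n:ℝ)-2)^2),
            Finset.sum_ite_eq' (Finset.Icc 1 n) 2 (fun _ => ((n:ℝ)-2)^2),
            if_pos h1n, if_pos h2n]
        ring
      rw [e1, e2, e3] at hq
      -- derive the contradiction
      have hnm : (n:ℝ) = (m:ℝ) + 3 := by rw [hn]; push_cast; ring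
      have hm' : (x - 2*y + z) < (m:ℝ) * (-(y-z)) :=
        (div_lt_iff₀ (by linarith : (0:ℝ) < -(y-z))).mp hm
      rw [hnm] at hq
      nlinarith [hq, hm', hb, (Nat.cast_nonneg m : (0:ℝ) ≤ m)]
    -- Step 3 : `0 ≤ z` from the all-ones vector for large `n`.
    have hc : 0 ≤ z := by
      by_contra hc
      push_neg at hc
      obtain ⟨m, hm⟩ := exists_nat_gt ((4*(y-z) + 2*(x - 2*y + z) + 2) / (-z))
      set n : ℕ := m + 2 with hn
      have hq := h n (by omega) (fun _ => (1:ℝ))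
      rw [quad_eq] at hq
      have hM : ∑ e ∈ edgesN n, ((1:ℝ))^2 = (n:ℝ) * ((n:ℝ) - 1) / 2 := by
        simp [← edgesN_card n]
      have hM' : ∑ e ∈ edgesN n, (1:ℝ) = (n:ℝ) * ((n:ℝ) - 1) / 2 := by
        simp [← edgesN_card n]
      have hI : ∑ i ∈ Finset.Icc 1 n, (∑ e ∈ edgesN n, (if i ∈ e then (1:ℝ) else 0) * (1:ℝ))^2
          = (n:ℝ) * ((n:ℝ) - 1)^2 := by
        rw [Finset.sum_congr rfl (fun i hi => by rw [show (∑ e ∈ edgesN n, (if i ∈ e then (1:ℝ) else 0) * (1:ℝ)) = ∑ e ∈ edgesN n, (if i ∈ e then (1:ℝ) else 0) from Finset.sum_congr rfl fun e _ => by ring, deg_sum hi])]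
        rw [Finset.sum_const, Nat.card_Icc, show n + 1 - 1 = n from rfl, nsmul_eq_mul]
      rw [hM, hM', hI] at hq
      have hnm : (n:ℝ) = (m:ℝ) + 2 := by rw [hn]; push_cast; ring
      have hm' : (4*(y-z) + 2*(x - 2*y + z) + 2) < (m:ℝ) * (-z) :=
        (div_lt_iff₀ (by linarith : (0:ℝ) < -z)).mp hm
      rw [hnm] at hq
      have hP : (0:ℝ) < ((m:ℝ)+2)*((m:ℝ)+1)/2 := by positivity
      have hfac : (x - 2 * y + z) * (((m:ℝ) + 2) * ((m:ℝ) + 2 - 1) / 2)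
            + (y - z) * (((m:ℝ) + 2) * ((m:ℝ) + 2 - 1) ^ 2)
            + z * (((m:ℝ) + 2) * ((m:ℝ) + 2 - 1) / 2) ^ 2
          = (((m:ℝ)+2)*((m:ℝ)+1)/2)
            * ((x - 2*y + z) + 2*(y - z)*((m:ℝ)+1) + z*((m:ℝ)+2)*((m:ℝ)+1)/2) := by ring
      rw [hfac] at hq
      have hQ : 0 ≤ (x - 2*y + z) + 2*(y - z)*((m:ℝ)+1) + z*((m:ℝ)+2)*((m:ℝ)+1)/2 := by
        by_contra hneg
        push_neg at hneg
        have := mul_neg_of_pos_of_neg hP hneg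
        linarith
      have h1 : z*((m:ℝ)+2) < -(4*(y-z) + 2*(x - 2*y + z) + 2) := by nlinarith [hm', hc]
      have h2 : 2*(y-z) + z*((m:ℝ)+2)/2 ≤ -((x - 2*y + z)+1) := by linarith
      have h3 : ((m:ℝ)+1)*(2*(y-z) + z*((m:ℝ)+2)/2) ≤ ((m:ℝ)+1)*(-((x - 2*y + z)+1)) :=
        mul_le_mul_of_nonneg_left h2 (by positivity)
      have h4 : ((m:ℝ)+1)*(-((x - 2*y + z)+1)) ≤ 1*(-((x - 2*y + z)+1)) :=
        mul_le_mul_of_nonpos_right (by simp [Nat.cast_nonneg] : (1:ℝ) ≤ (m:ℝ)+1) (by linarith)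
      have hkey : (x - 2*y + z) + 2*(y - z)*((m:ℝ)+1) + z*((m:ℝ)+2)*((m:ℝ)+1)/2
          = (x - 2*y + z) + ((m:ℝ)+1)*(2*(y-z) + z*((m:ℝ)+2)/2) := by ring
      linarith [hQ, hkey ▸ hQ, h3, h4]
    exact ⟨ha, hc, hb⟩
  · rintro ⟨ha, hc, hb⟩ n hn v
    rw [quad_eq]
    have t1 : 0 ≤ (x - 2*y + z) * ∑ e ∈ edgesN n, (v e)^2 :=
      mul_nonneg (by linarith) (Finset.sum_nonneg fun e _ => sq_nonneg _)
    have t2 : 0 ≤ (y - z) * ∑ i ∈ Finset.Icc 1 n,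
        (∑ e ∈ edgesN n, (if i ∈ e then (1:ℝ) else 0) * v e)^2 :=
      mul_nonneg hb (Finset.sum_nonneg fun i _ => sq_nonneg _)
    have t3 : 0 ≤ z * (∑ e ∈ edgesN n, v e)^2 := mul_nonneg hc (sq_nonneg _)
    linarith
end

section
/- Let (x, y, z) = (3, 1, 2) and, for each integer n ≥ 2, let A^{(n)} be the real symmetric matrix indexed by the 2-element subsets of [n] with entries A^{(n)}_{e,f} = x if e = f, A^{(n)}_{e,f} = y if |e ∩ f| = 1, and A^{(n)}_{e,f} = z if e ∩ f = ∅. Then A^{(4)} is positive definite (all its eigenvalues are strictly positive), yet there exists an integer n ≥ 4 for which A^{(n)} is not positive semidefinite. -/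
/-!
Two distinct edges of `[4]` either meet in one point or are complementary, so
`A⁽⁴⁾ = I + (I + P) + J`, where `P` is the permutation matrix of complementation and `J` the
all-ones matrix; `I + P` is positive semidefinite because complementation is an involution.

For general `n` one has `A_{ef} = 2 + 3 δ_{ef} - |e ∩ f|`, hence
`xᵀ A x = 2 (∑ x_e)² + 3 ∑ x_e² - ∑_v (∑_{e ∋ v} x_e)²`, and the last term wins for large
stars: for `n = 6` the vector that is `1` on the edges `{1, j}` and `-1` on the edges `{2, j}`
(`j ≥ 3`) gives `0 + 24 - 32 = -8`.
-/

open Finset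

/-- The matrix indexed by the 2-subsets of `[n]` with entries `x = 3` on the diagonal,
`y = 1` for intersecting pairs and `z = 2` for disjoint pairs. -/
def Amat312 (n : ℕ) : Matrix ↥(edgesN n) ↥(edgesN n) ℝ :=
  Matrix.of fun e f => if e = f then 3 else if (e.1 ∩ f.1).card = 1 then 1 else 2

open Matrix

section PermMatrix

variable {ι R : Type*} [Fintype ι] [CommRing R] [LinearOrder R] [IsStrictOrderedRing R]

theorem neg_sum_sq_le_sum_mul_comp_perm (σ : Equiv.Perm ι) (x : ι → R) :
    -∑ i, x i ^ 2 ≤ ∑ i, x i * x (σ i) := by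
  have hsq : 0 ≤ ∑ i, (x i + x (σ i)) ^ 2 := sum_nonneg fun i _ => sq_nonneg _
  have hperm : ∑ i, x (σ i) ^ 2 = ∑ i, x i ^ 2 := Equiv.sum_comp σ fun i => x i ^ 2
  have hexpand : ∑ i, (x i + x (σ i)) ^ 2 =
      ∑ i, x i ^ 2 + ∑ i, x (σ i) ^ 2 + 2 * ∑ i, x i * x (σ i) := by
    simp only [add_sq, sum_add_distrib, mul_sum, mul_assoc, add_right_comm]
  linarith

variable [StarRing R] [TrivialStar R] [DecidableEq ι]

theorem posSemidef_one_add_permMatrix_of_involutive {f : ι → ι} (hf : Function.Involutive f) :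
    (1 + (hf.toPerm f).permMatrix R).PosSemidef := by
  have hinv : (hf.toPerm f)⁻¹ = hf.toPerm f := hf.toPerm_symm
  refine posSemidef_iff_dotProduct_mulVec.mpr ⟨by simp [IsHermitian, hinv], fun x => ?_⟩
  have hperm := neg_sum_sq_le_sum_mul_comp_perm (hf.toPerm f) x
  rw [star_trivial, add_mulVec, one_mulVec, permMatrix_mulVec, dotProduct_add]
  simp only [dotProduct, Function.comp_apply, ← sq]
  linarith

end PermMatrix

-- An integer copy of `Amat312`, so that facts about a fixed `n` can be checked by `decide`.
def intAmat312 (n : ℕ) : Matrix (edgesN n) (edgesN n) ℤ :=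
  of fun e f => if e = f then 3 else if #(e.1 ∩ f.1) = 1 then 1 else 2

theorem Amat312_eq_map_intAmat312 (n : ℕ) : Amat312 n = (intAmat312 n).map (↑) := by
  ext e f
  simp only [Amat312, intAmat312, of_apply, map_apply]
  split_ifs <;> norm_num

def edgeCompl (e : edgesN 4) : edgesN 4 :=
  ⟨Icc 1 4 \ e, by
    obtain ⟨hsub, hcard⟩ := mem_powersetCard.mp e.2
    exact mem_powersetCard.mpr ⟨sdiff_subset, by rw [card_sdiff_of_subset hsub, hcard]; rfl⟩⟩

theorem edgeCompl_involutive : Function.Involutive edgeCompl := fun e =>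
  Subtype.ext (Finset.sdiff_sdiff_eq_self (mem_powersetCard.mp e.2).1)

theorem intAmat312_four :
    intAmat312 4 = 1 + (1 + (edgeCompl_involutive.toPerm _).permMatrix ℤ) + vecMulVec 1 1 := by
  decide

theorem Amat312_four :
    Amat312 4 = 1 + (1 + (edgeCompl_involutive.toPerm _).permMatrix ℝ) + vecMulVec 1 1 := by
  rw [Amat312_eq_map_intAmat312, intAmat312_four]
  ext e f
  simp [one_apply]

theorem posDef_Amat312_four : (Amat312 4).PosDef := by
  rw [Amat312_four]
  refine (PosDef.one.add_posSemidef (posSemidef_one_add_permMatrix_of_involutive _)).add_posSemidef ?_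
  simpa using posSemidef_vecMulVec_self_star (1 : edgesN 4 → ℝ)

def starDiff (s : Finset ℕ) : ℤ :=
  if 1 ∈ s then (if 2 ∈ s then 0 else 1) else if 2 ∈ s then -1 else 0

theorem intAmat312_six_quadForm :
    (fun e : edgesN 6 => starDiff e) ⬝ᵥ (intAmat312 6 *ᵥ fun e => starDiff e) = -8 := by
  decide

theorem not_posSemidef_Amat312_six : ¬ (Amat312 6).PosSemidef := fun hA => by
  have hnonneg := hA.dotProduct_mulVec_nonneg fun e => (starDiff e : ℝ)
  have hform := congrArg (Int.cast : ℤ → ℝ) intAmat312_six_quadForm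
  rw [Amat312_eq_map_intAmat312] at hnonneg
  simp only [dotProduct, mulVec, map_apply, star_trivial, Int.cast_sum, Int.cast_mul, Int.cast_neg,
    Int.cast_ofNat] at hnonneg hform
  linarith

/-- **Remark 1, converse failure:** for `(x,y,z) = (3,1,2)` the matrix `A^{(4)}` is
positive definite, yet `A^{(n)}` fails to be positive semidefinite for some `n ≥ 4`. -/
theorem A4_posDef_but_not_all_PSD :
    (Amat312 4).PosDef ∧ ∃ n, 4 ≤ n ∧ ¬ (Amat312 n).PosSemidef :=
  ⟨posDef_Amat312_four, 6, by norm_num, not_posSemidef_Amat312_six⟩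
end

section
/- Let n ≥ 2, let E be the set of 2-element subsets of [n], and let e₁ = {1,2}. For all i, j ∈ E, one has (v_{e₁}+v_i+v_j)! · b_{v_{e₁}+v_i+v_j} = (1/|e₁ ∪ i ∪ j|) · (1/|e₁ ∪ i| + 1/|e₁ ∪ j| + 1/|i ∪ j|), where for α ∈ ℕ^E one writes α! = ∏_{e∈E} α_e!. -/
open Finset
open scoped Classical

/-- `b_α = Σ ∏_{i=1}^d 1/|e_1 ∪ ⋯ ∪ e_i|`, the sum over all `d`-tuples of edges of `[n]`
in which each edge `e` occurs exactly `α e` times. -/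
noncomputable def bcoef (n d : ℕ) (α : Finset ℕ → ℕ) : ℝ :=
  ∑ t : Fin d → ↥(edgesN n),
    if (∀ e : Finset ℕ, (Finset.univ.filter fun i => (t i).1 = e).card = α e) then
      ∏ i : Fin d,
        (1 : ℝ) / ((((Finset.univ.filter fun j : Fin d => j ≤ i)).biUnion
          fun j => (t j).1).card : ℝ)
    else 0

/-- The standard unit vector `v_e ∈ ℕ^E`. -/
def vunit (e : Finset ℕ) : Finset ℕ → ℕ := fun f => if f = e then 1 else 0

/-
Summing a weight over all orderings `s ∘ σ` of a fixed word `s` of edges reaches each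
rearrangement `t` of `s` once for every `σ` in a coset of the stabilizer of `s`, i.e.
`α! = ∏ₑ αₑ!` times; hence `α! · b_α = ∑_σ w(s ∘ σ)`, where `w` is the summand of `b_α`.
For three edges `x, y, z` (each of size 2) the orderings `(x, y, z)` and `(y, x, z)` together
contribute `2 · (1/2) · 1/|x ∪ y| · 1/|x ∪ y ∪ z|`, which gives the formula.
-/

open Equiv
open scoped Nat

section PermutationSums

variable {ι β : Type*} [Fintype ι] [DecidableEq β]

lemma card_filter_comp_perm (s : ι → β) (σ : Perm ι) (b : β) :
    #{i | s (σ i) = b} = #{i | s i = b} :=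
  card_equiv σ (by simp)

lemma exists_perm_comp_eq_of_card_filter_eq {s t : ι → β}
    (h : ∀ b, #{i | t i = b} = #{i | s i = b}) : ∃ τ : Perm ι, s ∘ τ = t :=
  ⟨ofFiberEquiv fun b => Fintype.equivOfCardEq (by simpa [Fintype.card_subtype] using h b),
    funext fun i => ofFiberEquiv_map _ i⟩

variable [DecidableEq ι] [Fintype β]

lemma card_filter_perm_comp_eq {s t : ι → β}
    (h : ∀ b, #{i | t i = b} = #{i | s i = b}) :
    #{σ : Perm ι | s ∘ σ = t} = ∏ b, (#{i | s i = b})! := by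
  obtain ⟨τ, rfl⟩ := exists_perm_comp_eq_of_card_filter_eq h
  have hcomp (σ : Perm ι) : s ∘ σ = s ∘ τ ↔ s ∘ ⇑(σ * τ⁻¹) = s := by
    constructor
    · intro hσ; ext i; simpa using congrFun hσ (τ⁻¹ i)
    · intro hσ; ext i; simpa using congrFun hσ (τ i)
  rw [card_equiv (Equiv.mulRight (τ⁻¹ : Perm ι)) (fun σ => by simp [hcomp])
    (t := {g : Perm ι | s ∘ g = s}), ← Fintype.card_subtype, DomMulAct.stabilizer_card]
  simp [Fintype.card_subtype]

theorem sum_perm_comp_eq_smul_sum {M : Type*} [AddCommMonoid M]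
    (s : ι → β) (f : (ι → β) → M) :
    ∑ σ : Perm ι, f (s ∘ σ)
      = (∏ b, (#{i | s i = b})!) • ∑ t with ∀ b, #{i | t i = b} = #{i | s i = b}, f t := by
  rw [← sum_fiberwise univ (fun σ : Perm ι => s ∘ σ), smul_sum, sum_filter]
  refine sum_congr rfl fun t _ => ?_
  rw [sum_congr rfl fun σ hσ => by rw [(mem_filter.1 hσ).2], sum_const]
  split_ifs with h
  · rw [card_filter_perm_comp_eq h]
  · rw [filter_eq_empty_iff.2 fun σ _ hσ => h fun b => by simp [← hσ, card_filter_comp_perm],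
      card_empty, zero_smul]

end PermutationSums

lemma sum_perm_fin_three {M : Type*} [AddCommMonoid M] (f : Fin 3 → Fin 3 → Fin 3 → M) :
    ∑ σ : Perm (Fin 3), f (σ 0) (σ 1) (σ 2)
      = f 0 1 2 + f 0 2 1 + f 1 0 2 + f 1 2 0 + f 2 0 1 + f 2 1 0 := by
  have huniv : (univ : Finset (Perm (Fin 3))) =
      {1, swap 1 2, swap 0 1, finRotate 3, (finRotate 3).symm, swap 0 2} := by decide
  rw [huniv]
  simp +decide only [sum_insert, mem_insert, mem_singleton, sum_singleton, add_assoc]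
  rfl

lemma forall_card_filter_val_eq_iff {ι γ : Type*} [Fintype ι] [DecidableEq γ] {p : γ → Prop}
    {s t : ι → Subtype p} :
    (∀ e, #{i | (t i).1 = e} = #{i | (s i).1 = e}) ↔ ∀ b, #{i | t i = b} = #{i | s i = b} := by
  refine ⟨fun h b => by simpa only [Subtype.ext_iff] using h b, fun h e => ?_⟩
  by_cases he : p e
  · simpa only [Subtype.ext_iff] using h ⟨e, he⟩
  · have hne (u : ι → Subtype p) : #{i | (u i).1 = e} = 0 :=
      card_eq_zero.2 (filter_eq_empty_iff.2 fun i _ hi => he (hi ▸ (u i).2))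
    rw [hne, hne]

noncomputable def prefixUnionWeight {α : Type*} [DecidableEq α] {d : ℕ} (t : Fin d → Finset α) :
    ℝ :=
  ∏ i, 1 / (#((univ.filter fun j => j ≤ i).biUnion t) : ℝ)

lemma prefixUnionWeight_fin_three {α : Type*} [DecidableEq α] (t : Fin 3 → Finset α) :
    prefixUnionWeight t = 1 / #(t 0) * (1 / #(t 0 ∪ t 1)) * (1 / #(t 0 ∪ t 1 ∪ t 2)) := by
  have h0 : (univ.filter fun j : Fin 3 => j ≤ 0) = {0} := by decide
  have h1 : (univ.filter fun j : Fin 3 => j ≤ 1) = {0, 1} := by decide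
  have h2 : (univ.filter fun j : Fin 3 => j ≤ 2) = {0, 1, 2} := by decide
  rw [prefixUnionWeight, Fin.prod_univ_three, h0, h1, h2]
  simp [union_assoc]

theorem factorial_mul_bcoef (n d : ℕ) (s : Fin d → edgesN n) :
    ((∏ b, (#{k | s k = b})! : ℕ) : ℝ) * bcoef n d (fun e => #{k | (s k).1 = e})
      = ∑ σ : Perm (Fin d), prefixUnionWeight ((Subtype.val ∘ s) ∘ σ) := by
  refine Eq.trans ?_
    (sum_perm_comp_eq_smul_sum s fun t => prefixUnionWeight fun k => (t k).1).symm
  rw [nsmul_eq_mul, sum_filter, bcoef]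
  exact congrArg _ (sum_congr rfl fun t _ => if_congr forall_card_filter_val_eq_iff rfl rfl)

theorem sum_perm_prefixUnionWeight_of_card_eq_two {α : Type*} [DecidableEq α] {x y z : Finset α}
    (hx : #x = 2) (hy : #y = 2) (hz : #z = 2) :
    ∑ σ : Perm (Fin 3), prefixUnionWeight (![x, y, z] ∘ σ)
      = 1 / #(x ∪ y ∪ z) * (1 / #(x ∪ y) + 1 / #(x ∪ z) + 1 / #(y ∪ z)) := by
  set v := ![x, y, z]
  simp only [prefixUnionWeight_fin_three, Function.comp_apply]
  rw [sum_perm_fin_three fun a b c =>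
    1 / (#(v a) : ℝ) * (1 / #(v a ∪ v b)) * (1 / #(v a ∪ v b ∪ v c))]
  simp only [v, Matrix.cons_val_zero, Matrix.cons_val_one, Matrix.cons_val, hx, hy, hz,
    Nat.cast_ofNat, union_comm, union_left_comm]
  ring

/-- **Example (d = 3):** with `e₁ = {1,2}`, for all edges `i, j` of `[n]`,
`(v_{e₁}+v_i+v_j)! · b_{v_{e₁}+v_i+v_j}
  = (1/|e₁∪i∪j|) · (1/|e₁∪i| + 1/|e₁∪j| + 1/|i∪j|)`. -/
theorem bcoef_d3_formula (n : ℕ) (hn : 2 ≤ n) :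
    ∀ i ∈ edgesN n, ∀ j ∈ edgesN n,
      ((∏ e ∈ edgesN n,
          Nat.factorial (vunit {1, 2} e + vunit i e + vunit j e) : ℕ) : ℝ) *
          bcoef n 3 (fun e => vunit {1, 2} e + vunit i e + vunit j e)
        = (1 / ((({1, 2} : Finset ℕ) ∪ i ∪ j).card : ℝ)) *
            (1 / ((({1, 2} : Finset ℕ) ∪ i).card : ℝ)
              + 1 / ((({1, 2} : Finset ℕ) ∪ j).card : ℝ)
              + 1 / (((i ∪ j).card : ℕ) : ℝ)) := by
  intro i hi j hj
  have he₁ : ({1, 2} : Finset ℕ) ∈ edgesN n := mem_powersetCard.2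
    ⟨fun x hx => by simp only [mem_insert, mem_singleton] at hx; rw [mem_Icc]; omega, rfl⟩
  set s : Fin 3 → edgesN n := ![⟨{1, 2}, he₁⟩, ⟨i, hi⟩, ⟨j, hj⟩]
  have hα (e : Finset ℕ) : vunit {1, 2} e + vunit i e + vunit j e = #{k | (s k).1 = e} := by
    rw [card_filter, Fin.sum_univ_three]
    simp only [s, vunit, eq_comm, Matrix.cons_val_zero, Matrix.cons_val_one, Matrix.cons_val]
    congr!
  have hfac :
      ∏ e ∈ edgesN n, (vunit {1, 2} e + vunit i e + vunit j e)! = ∏ b, (#{k | s k = b})! := by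
    rw [← prod_coe_sort]
    refine prod_congr rfl fun b _ => ?_
    rw [hα]
    simp only [Subtype.ext_iff]
  have hval : Subtype.val ∘ s = ![{1, 2}, i, j] := by
    funext k
    fin_cases k <;> rfl
  rw [hfac]
  simp only [hα]
  rw [factorial_mul_bcoef, hval]
  exact sum_perm_prefixUnionWeight_of_card_eq_two (mem_powersetCard.1 he₁).2
    (mem_powersetCard.1 hi).2 (mem_powersetCard.1 hj).2
end

section
/- Fix integers d ≥ 3 and k ≥ 0 with k ≤ n and n ≥ k+4, and fix 2-element subsets e_1, ..., e_{d−2} of [k]. Let E be the set of 2-element subsets of [n] and let γ ∈ ℕ^E be the multiplicity vector of the tuple (e_1,...,e_{d−2}). Then 2·b_{γ + 2v_{{k+1,k+2}}} − 2·b_{γ + v_{{k+1,k+2}} + v_{{k+1,k+3}}} + b_{γ + v_{{k+1,k+2}} + v_{{k+3,k+4}}} ≥ 0. -/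
open Finset
open scoped Classical

/-- The multiplicity vector `γ` of a tuple of edges: `γ e` is the number of indices `l`
with `e_l = e`. -/
def multVec {r : ℕ} (es : Fin r → Finset ℕ) : Finset ℕ → ℕ :=
  fun e => (Finset.univ.filter fun l => es l = e).card

noncomputable def pweight (n d : ℕ) (t : Fin d → ↥(edgesN n)) : ℝ :=
  ∏ i : Fin d,
    (1 : ℝ) / ((((Finset.univ.filter fun j : Fin d => j ≤ i)).biUnion
      fun j => (t j).1).card : ℝ)

noncomputable def mcard (n d : ℕ) (f : Fin d → ↥(edgesN n)) (i : Fin d) : ℕ :=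
  ((Finset.univ.filter fun j : Fin d => j ≤ i).biUnion fun j => (f j).1).card

lemma pweight_eq (n d : ℕ) (t : Fin d → ↥(edgesN n)) :
    pweight n d t = ∏ i : Fin d, (1 : ℝ) / (mcard n d t i : ℝ) := rfl

noncomputable def Tset (n d : ℕ) (α : Finset ℕ → ℕ) : Finset (Fin d → ↥(edgesN n)) :=
  Finset.univ.filter fun t => ∀ e, (Finset.univ.filter fun i => (t i).1 = e).card = α e

lemma bcoef_eq_sum (n d : ℕ) (α : Finset ℕ → ℕ) :
    bcoef n d α = ∑ t ∈ Tset n d α, pweight n d t := by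
  rw [Tset, Finset.sum_filter, bcoef]
  rfl

lemma edgesN_card_s9 {n : ℕ} {e : Finset ℕ} (he : e ∈ edgesN n) : e.card = 2 :=
  (Finset.mem_powersetCard.1 he).2

lemma edgesN_sub {n : ℕ} {e : Finset ℕ} (he : e ∈ edgesN n) : e ⊆ Finset.Icc 1 n :=
  (Finset.mem_powersetCard.1 he).1

def eA (k : ℕ) : Finset ℕ := {k+1, k+2}
def eB (k : ℕ) : Finset ℕ := {k+1, k+3}
def eC (k : ℕ) : Finset ℕ := {k+3, k+4}

lemma card_eA (k : ℕ) : (eA k).card = 2 := by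
  rw [eA, Finset.card_insert_of_notMem (by simp), Finset.card_singleton]

lemma card_eB (k : ℕ) : (eB k).card = 2 := by
  rw [eB, Finset.card_insert_of_notMem (by simp), Finset.card_singleton]

lemma card_eC (k : ℕ) : (eC k).card = 2 := by
  rw [eC, Finset.card_insert_of_notMem (by simp), Finset.card_singleton]

lemma eA_ne_eB (k : ℕ) : eA k ≠ eB k := by
  intro h
  have : (k+2) ∈ eB k := h ▸ (by simp [eA] : (k+2) ∈ eA k)
  simp [eB] at this

lemma eA_ne_eC (k : ℕ) : eA k ≠ eC k := by
  intro h
  have : (k+1) ∈ eC k := h ▸ (by simp [eA] : (k+1) ∈ eA k)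
  simp [eC] at this

lemma eB_ne_eC (k : ℕ) : eB k ≠ eC k := by
  intro h
  have : (k+1) ∈ eC k := h ▸ (by simp [eB] : (k+1) ∈ eB k)
  simp [eC] at this

lemma eA_mem {k n : ℕ} (hn : k + 4 ≤ n) : eA k ∈ edgesN n := by
  rw [edgesN, Finset.mem_powersetCard]
  refine ⟨?_, card_eA k⟩
  intro m hm; simp [eA] at hm; simp [Finset.mem_Icc]; omega

lemma eB_mem {k n : ℕ} (hn : k + 4 ≤ n) : eB k ∈ edgesN n := by
  rw [edgesN, Finset.mem_powersetCard]
  refine ⟨?_, card_eB k⟩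
  intro m hm; simp [eB] at hm; simp [Finset.mem_Icc]; omega

lemma eC_mem {k n : ℕ} (hn : k + 4 ≤ n) : eC k ∈ edgesN n := by
  rw [edgesN, Finset.mem_powersetCard]
  refine ⟨?_, card_eC k⟩
  intro m hm; simp [eC] at hm; simp [Finset.mem_Icc]; omega

lemma high_mem {k m : ℕ} (hm : m ∈ eA k ∪ eB k ∪ eC k) : k < m := by
  simp [eA, eB, eC] at hm
  omega

lemma not_sub_Icc_A (k : ℕ) : ¬ eA k ⊆ Finset.Icc 1 k := by
  intro h
  have := h (by simp [eA] : (k+1) ∈ eA k)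
  simp [Finset.mem_Icc] at this

lemma not_sub_Icc_B (k : ℕ) : ¬ eB k ⊆ Finset.Icc 1 k := by
  intro h
  have := h (by simp [eB] : (k+1) ∈ eB k)
  simp [Finset.mem_Icc] at this

lemma not_sub_Icc_C (k : ℕ) : ¬ eC k ⊆ Finset.Icc 1 k := by
  intro h
  have := h (by simp [eC] : (k+3) ∈ eC k)
  simp [Finset.mem_Icc] at this

lemma card_AB (k : ℕ) : (eA k ∪ eB k).card = 3 := by
  have : eA k ∪ eB k = {k+1, k+2, k+3} := by
    ext m; simp [eA, eB]
  rw [this, Finset.card_insert_of_notMem (by simp),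
    Finset.card_insert_of_notMem (by simp), Finset.card_singleton]

lemma card_AC (k : ℕ) : (eA k ∪ eC k).card = 4 := by
  have : eA k ∪ eC k = {k+1, k+2, k+3, k+4} := by
    ext m; simp [eA, eC]; omega
  rw [this, Finset.card_insert_of_notMem (by simp),
    Finset.card_insert_of_notMem (by simp),
    Finset.card_insert_of_notMem (by simp), Finset.card_singleton]

lemma card_AA (k : ℕ) : (eA k ∪ eA k).card = 2 := by
  rw [Finset.union_self]; exact card_eA k

lemma count_update {d : ℕ} {β : Type*} (t : Fin d → β) (v : β → Finset ℕ) (q : Fin d)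
    (x : β) (e : Finset ℕ) :
    (Finset.univ.filter fun i => v (Function.update t q x i) = e).card =
      (Finset.univ.filter fun i => v (t i) = e).card
        - (if v (t q) = e then 1 else 0) + (if v x = e then 1 else 0) := by
  classical
  set A := Finset.univ.filter fun i => v (t i) = e with hA
  have hmem : ∀ i, i ∈ A ↔ v (t i) = e := by intro i; simp [hA]
  by_cases hx : v x = e
  · by_cases hq : v (t q) = e
    · have heq : (Finset.univ.filter fun i => v (Function.update t q x i) = e) = A := by
        ext i
        by_cases hiq : i = q
        · subst hiq; simp [Function.update_self, hx, hmem, hq]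
        · simp [Function.update_of_ne hiq, hmem]
      rw [heq, if_pos hx, if_pos hq]
      have h1 : 1 ≤ A.card := Finset.card_pos.2 ⟨q, (hmem q).2 hq⟩
      omega
    · have heq : (Finset.univ.filter fun i => v (Function.update t q x i) = e)
          = insert q A := by
        ext i
        by_cases hiq : i = q
        · subst hiq; simp [Function.update_self, hx, hmem]
        · simp [Function.update_of_ne hiq, hmem, hiq]
      rw [heq, if_pos hx, if_neg hq, Finset.card_insert_of_notMem (fun h => hq ((hmem q).1 h))]
      omega
  · by_cases hq : v (t q) = e
    · have heq : (Finset.univ.filter fun i => v (Function.update t q x i) = e)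
          = A.erase q := by
        ext i
        by_cases hiq : i = q
        · subst hiq; simp [Function.update_self, hx]
        · simp [Function.update_of_ne hiq, hmem, hiq]
      rw [heq, if_neg hx, if_pos hq, Finset.card_erase_of_mem ((hmem q).2 hq)]
      omega
    · have heq : (Finset.univ.filter fun i => v (Function.update t q x i) = e) = A := by
        ext i
        by_cases hiq : i = q
        · subst hiq; simp [Function.update_self, hx, hmem, hq]
        · simp [Function.update_of_ne hiq, hmem]
      rw [heq, if_neg hx, if_neg hq]
      omega

lemma prod_convex {ι : Type*} (s : Finset ι) (ma mb mc : ι → ℕ)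
    (h1 : ∀ i ∈ s, 1 ≤ ma i)
    (hc : ∀ i ∈ s, (mb i = ma i ∧ mc i = ma i) ∨ (mb i = ma i + 1 ∧ mc i = ma i + 2)) :
    2 * ∏ i ∈ s, (1:ℝ)/(mb i) ≤ (∏ i ∈ s, (1:ℝ)/(ma i)) + ∏ i ∈ s, (1:ℝ)/(mc i) := by
  have hma : ∀ i ∈ s, (0:ℝ) < ma i := by
    intro i hi; exact_mod_cast Nat.lt_of_lt_of_le Nat.zero_lt_one (h1 i hi)
  have hmb : ∀ i ∈ s, (0:ℝ) < mb i := by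
    intro i hi; rcases hc i hi with ⟨h,_⟩|⟨h,_⟩ <;> rw [h] <;>
      [exact hma i hi; positivity]
  have hmc : ∀ i ∈ s, (0:ℝ) < mc i := by
    intro i hi; rcases hc i hi with ⟨_,h⟩|⟨_,h⟩ <;> rw [h] <;>
      [exact hma i hi; positivity]
  set X := ∏ i ∈ s, (1:ℝ)/(ma i) with hX
  set Y := ∏ i ∈ s, (1:ℝ)/(mc i) with hY
  set Z := ∏ i ∈ s, (1:ℝ)/(mb i) with hZ
  have hXpos : 0 < X := Finset.prod_pos (fun i hi => by
    have := hma i hi; positivity)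
  have hYpos : 0 < Y := Finset.prod_pos (fun i hi => by
    have := hmc i hi; positivity)
  have hZpos : 0 < Z := Finset.prod_pos (fun i hi => by
    have := hmb i hi; positivity)
  have hkey : Z ^ 2 ≤ X * Y := by
    rw [hX, hY, hZ, ← Finset.prod_mul_distrib, ← Finset.prod_pow]
    apply Finset.prod_le_prod
    · intro i hi; have := hmb i hi; positivity
    · intro i hi
      have ha := hma i hi
      have hb := hmb i hi
      have hcc := hmc i hi
      rw [div_mul_div_comm, div_pow, one_pow, one_mul]
      apply div_le_div_of_nonneg_left (by norm_num) (by positivity)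
      rcases hc i hi with ⟨h2,h3⟩|⟨h2,h3⟩ <;> rw [h2,h3] <;> push_cast <;> nlinarith [hma i hi]
  nlinarith [sq_nonneg (X - Y), sq_nonneg (X + Y - 2*Z)]


lemma disj_high {k : ℕ} {S T : Finset ℕ} (hS : S ⊆ Finset.Icc 1 k)
    (hT : ∀ m ∈ T, k < m) : Disjoint T S := by
  rw [Finset.disjoint_left]
  intro m hmT hmS
  have h1 := (Finset.mem_Icc.1 (hS hmS)).2
  exact absurd (hT m hmT) (by omega)

lemma high_of {k : ℕ} {x : Finset ℕ} (hx : x = eA k ∨ x = eB k ∨ x = eC k) :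
    ∀ m ∈ eA k ∪ x, k < m := by
  intro m hm
  apply high_mem (k := k)
  rcases Finset.mem_union.1 hm with h | h
  · exact Finset.mem_union.2 (Or.inl (Finset.mem_union.2 (Or.inl h)))
  · rcases hx with h' | h' | h' <;> subst h'
    · exact Finset.mem_union.2 (Or.inl (Finset.mem_union.2 (Or.inl h)))
    · exact Finset.mem_union.2 (Or.inl (Finset.mem_union.2 (Or.inr h)))
    · exact Finset.mem_union.2 (Or.inr h)

lemma prefix_cases {n d k : ℕ} (t : Fin d → ↥(edgesN n)) (p q : Fin d) (hpq : p ≠ q)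
    (htp : (t p).1 = eA k) (htq : (t q).1 = eB k)
    (hother : ∀ j, j ≠ p → j ≠ q → (t j).1 ⊆ Finset.Icc 1 k)
    (A C : ↥(edgesN n)) (hA : A.1 = eA k) (hC : C.1 = eC k) (i : Fin d) :
    (mcard n d t i = mcard n d (Function.update t q A) i ∧
      mcard n d (Function.update t q C) i = mcard n d (Function.update t q A) i) ∨
    (mcard n d t i = mcard n d (Function.update t q A) i + 1 ∧
      mcard n d (Function.update t q C) i = mcard n d (Function.update t q A) i + 2) := by
  classical
  simp only [mcard]
  set P := Finset.univ.filter fun j : Fin d => j ≤ i with hP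
  have hmemP : ∀ j : Fin d, j ∈ P ↔ j ≤ i := by intro j; simp [hP]
  by_cases hq : q ∈ P
  · by_cases hp : p ∈ P
    · -- both special positions in the prefix
      right
      set Q := (P.erase p).erase q with hQ
      have hQp : ∀ j ∈ Q, j ≠ p := by
        intro j hj
        exact Finset.ne_of_mem_erase (Finset.mem_of_mem_erase hj)
      have hQq : ∀ j ∈ Q, j ≠ q := by
        intro j hj; exact Finset.ne_of_mem_erase hj
      have hPdec : P = insert p (insert q Q) := by
        rw [hQ, Finset.insert_erase (Finset.mem_erase.2 ⟨hpq.symm, hq⟩),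
          Finset.insert_erase hp]
      set S := Q.biUnion (fun j => (t j).1) with hS
      have hSsub : S ⊆ Finset.Icc 1 k := by
        intro m hm
        rcases Finset.mem_biUnion.1 hm with ⟨j, hj, hmj⟩
        exact hother j (hQp j hj) (hQq j hj) hmj
      have hdecomp : ∀ x : ↥(edgesN n),
          P.biUnion (fun j => (Function.update t q x j).1) = (eA k ∪ x.1) ∪ S := by
        intro x
        rw [hPdec, Finset.biUnion_insert, Finset.biUnion_insert]
        have h1 : (Function.update t q x p).1 = eA k := by
          rw [Function.update_of_ne hpq]; exact htp
        have h2 : (Function.update t q x q).1 = x.1 := by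
          rw [Function.update_self]
        have h3 : Q.biUnion (fun j => (Function.update t q x j).1) = S := by
          apply Finset.biUnion_congr rfl
          intro j hj
          rw [Function.update_of_ne (hQq j hj)]
        rw [h1, h2, h3, Finset.union_assoc]
      have hTt : P.biUnion (fun j => (t j).1) = (eA k ∪ eB k) ∪ S := by
        have := hdecomp (t q)
        rwa [Function.update_eq_self, htq] at this
      have cardfun : ∀ x : ↥(edgesN n), x.1 = eA k ∨ x.1 = eB k ∨ x.1 = eC k →
          ((eA k ∪ x.1) ∪ S).card = (eA k ∪ x.1).card + S.card :=
        fun x hx => Finset.card_union_of_disjoint (disj_high hSsub (high_of hx))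
      have hta : (P.biUnion fun j => (Function.update t q A j).1).card
          = 2 + S.card := by
        rw [hdecomp A, cardfun A (Or.inl hA), hA, card_AA]
      have htb : (P.biUnion fun j => (t j).1).card = 3 + S.card := by
        rw [hTt]
        have := cardfun (t q) (Or.inr (Or.inl htq))
        rw [htq] at this
        rw [this, card_AB]
      have htc : (P.biUnion fun j => (Function.update t q C j).1).card
          = 4 + S.card := by
        rw [hdecomp C, cardfun C (Or.inr (Or.inr hC)), hC, card_AC]
      rw [hta, htb, htc]
      omega
    · -- q in prefix, p not
      left
      set Q := P.erase q with hQ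
      have hQq : ∀ j ∈ Q, j ≠ q := fun j hj => Finset.ne_of_mem_erase hj
      have hQp : ∀ j ∈ Q, j ≠ p := by
        intro j hj h
        exact hp (h ▸ Finset.mem_of_mem_erase hj)
      have hPdec : P = insert q Q := by rw [hQ, Finset.insert_erase hq]
      set S := Q.biUnion (fun j => (t j).1) with hS
      have hSsub : S ⊆ Finset.Icc 1 k := by
        intro m hm
        rcases Finset.mem_biUnion.1 hm with ⟨j, hj, hmj⟩
        exact hother j (hQp j hj) (hQq j hj) hmj
      have hdecomp : ∀ x : ↥(edgesN n),
          P.biUnion (fun j => (Function.update t q x j).1) = x.1 ∪ S := by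
        intro x
        rw [hPdec, Finset.biUnion_insert]
        have h2 : (Function.update t q x q).1 = x.1 := by rw [Function.update_self]
        have h3 : Q.biUnion (fun j => (Function.update t q x j).1) = S := by
          apply Finset.biUnion_congr rfl
          intro j hj
          rw [Function.update_of_ne (hQq j hj)]
        rw [h2, h3]
      have cardfun : ∀ x : ↥(edgesN n), x.1 = eA k ∨ x.1 = eB k ∨ x.1 = eC k →
          (P.biUnion (fun j => (Function.update t q x j).1)).card = 2 + S.card := by
        intro x hx
        rw [hdecomp x]
        have hdisj : Disjoint x.1 S := by
          apply disj_high hSsub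
          intro m hm
          exact high_of hx m (Finset.mem_union.2 (Or.inr hm))
        rw [Finset.card_union_of_disjoint hdisj]
        rcases hx with h | h | h <;> rw [h]
        · rw [card_eA]
        · rw [card_eB]
        · rw [card_eC]
      have htb : (P.biUnion fun j => (t j).1).card = 2 + S.card := by
        have := cardfun (t q) (Or.inr (Or.inl htq))
        rwa [Function.update_eq_self] at this
      rw [htb, cardfun A (Or.inl hA), cardfun C (Or.inr (Or.inr hC))]
      exact ⟨rfl, rfl⟩
  · -- q not in prefix: updates are irrelevant
    left
    have hdecomp : ∀ x : ↥(edgesN n),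
        P.biUnion (fun j => (Function.update t q x j).1)
          = P.biUnion (fun j => (t j).1) := by
      intro x
      apply Finset.biUnion_congr rfl
      intro j hj
      have hjq : j ≠ q := by rintro rfl; exact hq hj
      rw [Function.update_of_ne hjq]
    rw [hdecomp A, hdecomp C]
    exact ⟨rfl, rfl⟩

lemma mcard_pos (n d : ℕ) (f : Fin d → ↥(edgesN n)) (i : Fin d) : 1 ≤ mcard n d f i := by
  rw [mcard]
  apply Finset.card_pos.2
  have h2 : (f i).1.card = 2 := edgesN_card_s9 (f i).2
  have hne : (f i).1.Nonempty := Finset.card_pos.1 (by omega)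
  rcases hne with ⟨m, hm⟩
  exact ⟨m, Finset.mem_biUnion.2 ⟨i, Finset.mem_filter.2 ⟨Finset.mem_univ i, le_refl i⟩, hm⟩⟩

lemma key_ineq {n d k : ℕ} (t : Fin d → ↥(edgesN n)) (p q : Fin d) (hpq : p ≠ q)
    (htp : (t p).1 = eA k) (htq : (t q).1 = eB k)
    (hother : ∀ j, j ≠ p → j ≠ q → (t j).1 ⊆ Finset.Icc 1 k)
    (A C : ↥(edgesN n)) (hA : A.1 = eA k) (hC : C.1 = eC k) :
    2 * pweight n d t
      ≤ pweight n d (Function.update t q A) + pweight n d (Function.update t q C) := by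
  rw [pweight_eq, pweight_eq, pweight_eq]
  apply prod_convex
  · intro i _
    exact mcard_pos n d (Function.update t q A) i
  · intro i _
    exact prefix_cases t p q hpq htp htq hother A C hA hC i

lemma count_one_unique {n d : ℕ} (t : Fin d → ↥(edgesN n)) {e : Finset ℕ}
    (h : (Finset.univ.filter fun i => (t i).1 = e).card = 1) :
    ∃ q, (t q).1 = e ∧ ∀ j, (t j).1 = e → j = q := by
  rcases Finset.card_eq_one.1 h with ⟨q, hq⟩
  have hmem : ∀ j, (t j).1 = e ↔ j = q := by
    intro j
    constructor
    · intro hj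
      have : j ∈ Finset.univ.filter fun i => (t i).1 = e := by
        simp [hj]
      rw [hq] at this
      exact Finset.mem_singleton.1 this
    · intro hj
      rw [hj]
      have : q ∈ ({q} : Finset (Fin d)) := Finset.mem_singleton_self q
      rw [← hq] at this
      exact (Finset.mem_filter.1 this).2
  exact ⟨q, (hmem q).2 rfl, fun j hj => (hmem j).1 hj⟩

noncomputable def posOf {n d : ℕ} (hd : 0 < d) (t : Fin d → ↥(edgesN n)) (e : Finset ℕ) :
    Fin d :=
  if h : ∃ i, (t i).1 = e then h.choose else ⟨0, hd⟩

lemma posOf_spec {n d : ℕ} (hd : 0 < d) (t : Fin d → ↥(edgesN n)) {e : Finset ℕ} {q : Fin d}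
    (hq : (t q).1 = e) (huniq : ∀ j, (t j).1 = e → j = q) : posOf hd t e = q := by
  have hex : ∃ i, (t i).1 = e := ⟨q, hq⟩
  rw [posOf, dif_pos hex]
  exact huniq _ hex.choose_spec

lemma multVec_eq_zero {r : ℕ} (es : Fin r → Finset ℕ) {e : Finset ℕ}
    (he : ∀ l, es l ≠ e) : multVec es e = 0 := by
  rw [multVec, Finset.card_eq_zero, Finset.filter_eq_empty_iff]
  intro l _
  exact he l

lemma multVec_exists {r : ℕ} (es : Fin r → Finset ℕ) {e : Finset ℕ}
    (he : 1 ≤ multVec es e) : ∃ l, es l = e := by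
  rw [multVec] at he
  rcases Finset.card_pos.1 he with ⟨l, hl⟩
  exact ⟨l, (Finset.mem_filter.1 hl).2⟩

lemma vunit_same (e : Finset ℕ) : vunit e e = 1 := if_pos rfl

lemma vunit_ne {e f : Finset ℕ} (h : f ≠ e) : vunit e f = 0 := if_neg h


/-- **Proposition 1.4.** For the multiplicity vector `γ` of a tuple of `d − 2` edges
inside `[k]`, and `n ≥ k + 4`,
`2·b_{γ+2v_{{k+1,k+2}}} − 2·b_{γ+v_{{k+1,k+2}}+v_{{k+1,k+3}}} + b_{γ+v_{{k+1,k+2}}+v_{{k+3,k+4}}} ≥ 0`. -/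
theorem bcoef_combination_nonneg (d k n : ℕ) (hd : 3 ≤ d) (hkn : k ≤ n) (hn : k + 4 ≤ n)
    (es : Fin (d - 2) → Finset ℕ)
    (hes : ∀ l, es l ⊆ Finset.Icc 1 k ∧ (es l).card = 2) :
    0 ≤ 2 * bcoef n d (fun e => multVec es e + 2 * vunit {k+1, k+2} e)
        - 2 * bcoef n d (fun e => multVec es e + vunit {k+1, k+2} e + vunit {k+1, k+3} e)
        + bcoef n d (fun e => multVec es e + vunit {k+1, k+2} e + vunit {k+3, k+4} e) := by
  classical
  have hd0 : 0 < d := by omega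
  have haE : eA k ∈ edgesN n := eA_mem hn
  have hbE : eB k ∈ edgesN n := eB_mem hn
  have hcE : eC k ∈ edgesN n := eC_mem hn
  set A : ↥(edgesN n) := ⟨eA k, haE⟩ with hAdef
  set B : ↥(edgesN n) := ⟨eB k, hbE⟩ with hBdef
  set C : ↥(edgesN n) := ⟨eC k, hcE⟩ with hCdef
  have hA1 : A.1 = eA k := rfl
  have hB1 : B.1 = eB k := rfl
  have hC1 : C.1 = eC k := rfl
  have hesub : ∀ l, es l ⊆ Finset.Icc 1 k := fun l => (hes l).1
  have hγa : multVec es (eA k) = 0 :=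
    multVec_eq_zero es (fun l h => not_sub_Icc_A k (h ▸ hesub l))
  have hγb : multVec es (eB k) = 0 :=
    multVec_eq_zero es (fun l h => not_sub_Icc_B k (h ▸ hesub l))
  have hγc : multVec es (eC k) = 0 :=
    multVec_eq_zero es (fun l h => not_sub_Icc_C k (h ▸ hesub l))
  have hsub : ∀ e, 1 ≤ multVec es e → e ⊆ Finset.Icc 1 k := by
    intro e h
    rcases multVec_exists es h with ⟨l, hl⟩
    exact hl ▸ hesub l
  suffices main : 0 ≤ 2 * bcoef n d (fun e => multVec es e + 2 * vunit (eA k) e)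
      - 2 * bcoef n d (fun e => multVec es e + vunit (eA k) e + vunit (eB k) e)
      + bcoef n d (fun e => multVec es e + vunit (eA k) e + vunit (eC k) e) by
    exact main
  rw [bcoef_eq_sum, bcoef_eq_sum, bcoef_eq_sum]
  set T1 := Tset n d (fun e => multVec es e + 2 * vunit (eA k) e) with hT1
  set T2 := Tset n d (fun e => multVec es e + vunit (eA k) e + vunit (eB k) e) with hT2
  set T3 := Tset n d (fun e => multVec es e + vunit (eA k) e + vunit (eC k) e) with hT3
  -- counts of members
  have hcnt1 : ∀ t ∈ T1, ∀ e, (Finset.univ.filter fun i => (t i).1 = e).card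
      = multVec es e + 2 * vunit (eA k) e := by
    intro t ht; exact (Finset.mem_filter.1 ht).2
  have hcnt2 : ∀ t ∈ T2, ∀ e, (Finset.univ.filter fun i => (t i).1 = e).card
      = multVec es e + vunit (eA k) e + vunit (eB k) e := by
    intro t ht; exact (Finset.mem_filter.1 ht).2
  have hcnt3 : ∀ t ∈ T3, ∀ e, (Finset.univ.filter fun i => (t i).1 = e).card
      = multVec es e + vunit (eA k) e + vunit (eC k) e := by
    intro t ht; exact (Finset.mem_filter.1 ht).2
  -- structure of members of T2
  have hstruct2 : ∀ t ∈ T2, ∃ p q, p ≠ q ∧ (t p).1 = eA k ∧ (t q).1 = eB k ∧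
      (∀ j, (t j).1 = eA k → j = p) ∧ (∀ j, (t j).1 = eB k → j = q) ∧
      (∀ j, j ≠ p → j ≠ q → (t j).1 ⊆ Finset.Icc 1 k) := by
    intro t ht
    have hca : (Finset.univ.filter fun i => (t i).1 = eA k).card = 1 := by
      rw [hcnt2 t ht (eA k), hγa, vunit_same, vunit_ne (eA_ne_eB k)]
    have hcb : (Finset.univ.filter fun i => (t i).1 = eB k).card = 1 := by
      rw [hcnt2 t ht (eB k), hγb, vunit_same, vunit_ne (fun h => eA_ne_eB k h.symm)]
    rcases count_one_unique t hca with ⟨p, hp, hpu⟩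
    rcases count_one_unique t hcb with ⟨q, hq, hqu⟩
    have hpq : p ≠ q := by
      intro h
      exact eA_ne_eB k (by rw [← hp, h, hq])
    refine ⟨p, q, hpq, hp, hq, hpu, hqu, ?_⟩
    intro j hjp hjq
    have h1 : 1 ≤ (Finset.univ.filter fun i => (t i).1 = (t j).1).card :=
      Finset.card_pos.2 ⟨j, Finset.mem_filter.2 ⟨Finset.mem_univ j, rfl⟩⟩
    rw [hcnt2 t ht ((t j).1)] at h1
    by_cases h2 : (t j).1 = eA k
    · exact absurd (hpu j h2) hjp
    · by_cases h3 : (t j).1 = eB k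
      · exact absurd (hqu j h3) hjq
      · rw [vunit_ne h2, vunit_ne h3] at h1
        exact hsub _ (by omega)
  -- structure of members of T3 (only the eC-position)
  have hstruct3 : ∀ t ∈ T3, ∃ q, (t q).1 = eC k ∧ ∀ j, (t j).1 = eC k → j = q := by
    intro t ht
    have hcc : (Finset.univ.filter fun i => (t i).1 = eC k).card = 1 := by
      rw [hcnt3 t ht (eC k), hγc, vunit_same, vunit_ne (fun h => eA_ne_eC k h.symm)]
    exact count_one_unique t hcc
  -- transfer of membership along updates
  have hmemTset : ∀ (α : Finset ℕ → ℕ) (t : Fin d → ↥(edgesN n)),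
      (∀ e, (Finset.univ.filter fun i => (t i).1 = e).card = α e) → t ∈ Tset n d α := by
    intro α t h
    exact Finset.mem_filter.2 ⟨Finset.mem_univ t, h⟩
  have hupd21 : ∀ t ∈ T2, ∀ q, (t q).1 = eB k → Function.update t q A ∈ T1 := by
    intro t ht q hq
    apply hmemTset
    intro e
    rw [count_update t Subtype.val q A e, hcnt2 t ht e]
    simp only [hq, hA1]
    by_cases h1 : e = eB k
    · subst h1
      rw [if_pos rfl, if_neg (eA_ne_eB k), vunit_same, vunit_ne (fun h => eA_ne_eB k h.symm)]
      omega
    · rw [if_neg (fun h => h1 h.symm), vunit_ne h1]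
      by_cases h2 : e = eA k
      · subst h2
        rw [if_pos rfl, vunit_same]
        omega
      · rw [if_neg (fun h => h2 h.symm), vunit_ne h2]
        omega
  have hupd12 : ∀ t ∈ T1, ∀ q, (t q).1 = eA k → Function.update t q B ∈ T2 := by
    intro t ht q hq
    apply hmemTset
    intro e
    rw [count_update t Subtype.val q B e, hcnt1 t ht e]
    simp only [hq, hB1]
    by_cases h1 : e = eA k
    · subst h1
      rw [if_pos rfl, if_neg (fun h => eA_ne_eB k h.symm), vunit_same, vunit_ne (eA_ne_eB k)]
      omega
    · rw [if_neg (fun h => h1 h.symm), vunit_ne h1]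
      by_cases h2 : e = eB k
      · subst h2
        rw [if_pos rfl, vunit_same]
        omega
      · rw [if_neg (fun h => h2 h.symm), vunit_ne h2]
        omega
  have hupd23 : ∀ t ∈ T2, ∀ q, (t q).1 = eB k → Function.update t q C ∈ T3 := by
    intro t ht q hq
    apply hmemTset
    intro e
    rw [count_update t Subtype.val q C e, hcnt2 t ht e]
    simp only [hq, hC1]
    by_cases h1 : e = eB k
    · subst h1
      rw [if_pos rfl, if_neg (fun h => eB_ne_eC k h.symm), vunit_same, vunit_ne (eB_ne_eC k)]
      omega
    · rw [if_neg (fun h => h1 h.symm), vunit_ne h1]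
      by_cases h2 : e = eC k
      · subst h2
        rw [if_pos rfl, vunit_same]
        omega
      · rw [if_neg (fun h => h2 h.symm), vunit_ne h2]
        omega
  have hupd32 : ∀ t ∈ T3, ∀ q, (t q).1 = eC k → Function.update t q B ∈ T2 := by
    intro t ht q hq
    apply hmemTset
    intro e
    rw [count_update t Subtype.val q B e, hcnt3 t ht e]
    simp only [hq, hB1]
    by_cases h1 : e = eC k
    · subst h1
      rw [if_pos rfl, if_neg (eB_ne_eC k), vunit_same, vunit_ne (fun h => eB_ne_eC k h.symm)]
      omega
    · rw [if_neg (fun h => h1 h.symm), vunit_ne h1]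
      by_cases h2 : e = eB k
      · subst h2
        rw [if_pos rfl, vunit_same]
        omega
      · rw [if_neg (fun h => h2 h.symm), vunit_ne h2]
        omega
  -- identity II : the b3 sum, reindexed over T2
  have hII : ∑ t ∈ T3, pweight n d t
      = ∑ t ∈ T2, pweight n d (Function.update t (posOf hd0 t (eB k)) C) := by
    apply Finset.sum_nbij' (i := fun t => Function.update t (posOf hd0 t (eC k)) B)
      (j := fun t => Function.update t (posOf hd0 t (eB k)) C)
    · intro t ht
      rcases hstruct3 t ht with ⟨q, hq, hqu⟩
      rw [posOf_spec hd0 t hq hqu]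
      exact hupd32 t ht q hq
    · intro t ht
      rcases hstruct2 t ht with ⟨p, q, hpq, hp, hq, hpu, hqu, ho⟩
      rw [posOf_spec hd0 t hq hqu]
      exact hupd23 t ht q hq
    · intro t ht
      rcases hstruct3 t ht with ⟨q, hq, hqu⟩
      rw [posOf_spec hd0 t hq hqu]
      have hmem2 : Function.update t q B ∈ T2 := hupd32 t ht q hq
      have hq2 : ((Function.update t q B) q).1 = eB k := by rw [Function.update_self]
      have hall : ∀ j', ((Function.update t q B) j').1 = eB k → j' = q := by
        have hcb : (Finset.univ.filter fun i => ((Function.update t q B) i).1 = eB k).card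
            = 1 := by
          rw [hcnt2 _ hmem2 (eB k), hγb, vunit_ne (fun h => eA_ne_eB k h.symm), vunit_same]
        rcases count_one_unique _ hcb with ⟨q0, hq0, hq0u⟩
        intro j' hj'
        rw [hq0u j' hj', ← hq0u q hq2]
      rw [posOf_spec hd0 _ hq2 hall, Function.update_idem]
      have htqC : t q = C := Subtype.ext hq
      rw [← htqC, Function.update_eq_self]
    · intro t ht
      rcases hstruct2 t ht with ⟨p, q, hpq, hp, hq, hpu, hqu, ho⟩
      rw [posOf_spec hd0 t hq hqu]
      have hmem3 : Function.update t q C ∈ T3 := hupd23 t ht q hq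
      have hq3 : ((Function.update t q C) q).1 = eC k := by rw [Function.update_self]
      have hall : ∀ j', ((Function.update t q C) j').1 = eC k → j' = q := by
        have hcc : (Finset.univ.filter fun i => ((Function.update t q C) i).1 = eC k).card
            = 1 := by
          rw [hcnt3 _ hmem3 (eC k), hγc, vunit_ne (fun h => eA_ne_eC k h.symm), vunit_same]
        rcases count_one_unique _ hcc with ⟨q0, hq0, hq0u⟩
        intro j' hj'
        rw [hq0u j' hj', ← hq0u q hq3]
      rw [posOf_spec hd0 _ hq3 hall, Function.update_idem]
      have htqB : t q = B := Subtype.ext hq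
      rw [← htqB, Function.update_eq_self]
    · intro t ht
      rcases hstruct3 t ht with ⟨q, hq, hqu⟩
      rw [posOf_spec hd0 t hq hqu]
      have hmem2 : Function.update t q B ∈ T2 := hupd32 t ht q hq
      have hq2 : ((Function.update t q B) q).1 = eB k := by rw [Function.update_self]
      have hall : ∀ j', ((Function.update t q B) j').1 = eB k → j' = q := by
        have hcb : (Finset.univ.filter fun i => ((Function.update t q B) i).1 = eB k).card
            = 1 := by
          rw [hcnt2 _ hmem2 (eB k), hγb, vunit_ne (fun h => eA_ne_eB k h.symm), vunit_same]
        rcases count_one_unique _ hcb with ⟨q0, hq0, hq0u⟩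
        intro j' hj'
        rw [hq0u j' hj', ← hq0u q hq2]
      rw [posOf_spec hd0 _ hq2 hall, Function.update_idem]
      have htqC : t q = C := Subtype.ext hq
      rw [← htqC, Function.update_eq_self]
  -- identity I : twice the b1 sum, reindexed over T2
  set Pr := (T1 ×ˢ (Finset.univ : Finset (Fin d))).filter
      (fun z => (z.1 z.2).1 = eA k) with hPrdef
  have hmemPr : ∀ z, z ∈ Pr ↔ z.1 ∈ T1 ∧ (z.1 z.2).1 = eA k := by
    intro z
    rw [hPrdef, Finset.mem_filter, Finset.mem_product]
    constructor
    · rintro ⟨⟨h1, _⟩, h2⟩; exact ⟨h1, h2⟩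
    · rintro ⟨h1, h2⟩; exact ⟨⟨h1, Finset.mem_univ _⟩, h2⟩
  have hI1 : ∑ z ∈ Pr, pweight n d z.1
      = ∑ t ∈ T2, pweight n d (Function.update t (posOf hd0 t (eB k)) A) := by
    refine Finset.sum_nbij'
      (fun z : (Fin d → ↥(edgesN n)) × Fin d => Function.update z.1 z.2 B)
      (fun t : Fin d → ↥(edgesN n) =>
        (Function.update t (posOf hd0 t (eB k)) A, posOf hd0 t (eB k)))
      ?_ ?_ ?_ ?_ ?_
    · intro z hz
      rcases (hmemPr z).1 hz with ⟨hz1, hz2⟩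
      exact hupd12 z.1 hz1 z.2 hz2
    · intro t ht
      rcases hstruct2 t ht with ⟨p, q, hpq, hp, hq, hpu, hqu, ho⟩
      rw [posOf_spec hd0 t hq hqu]
      refine (hmemPr _).2 ⟨hupd21 t ht q hq, ?_⟩
      dsimp only
      rw [Function.update_self]
    · intro z hz
      rcases (hmemPr z).1 hz with ⟨hz1, hz2⟩
      have hmem2 : Function.update z.1 z.2 B ∈ T2 := hupd12 z.1 hz1 z.2 hz2
      have hq2 : ((Function.update z.1 z.2 B) z.2).1 = eB k := by rw [Function.update_self]
      have hall : ∀ j', ((Function.update z.1 z.2 B) j').1 = eB k → j' = z.2 := by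
        have hcb : (Finset.univ.filter
            fun i => ((Function.update z.1 z.2 B) i).1 = eB k).card = 1 := by
          rw [hcnt2 _ hmem2 (eB k), hγb, vunit_ne (fun h => eA_ne_eB k h.symm), vunit_same]
        rcases count_one_unique _ hcb with ⟨q0, hq0, hq0u⟩
        intro j' hj'
        rw [hq0u j' hj', ← hq0u z.2 hq2]
      have hATA : z.1 z.2 = A := Subtype.ext hz2
      rw [posOf_spec hd0 _ hq2 hall, Function.update_idem, ← hATA,
        Function.update_eq_self]
    · intro t ht
      dsimp only
      rcases hstruct2 t ht with ⟨p, q, hpq, hp, hq, hpu, hqu, ho⟩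
      rw [posOf_spec hd0 t hq hqu, Function.update_idem]
      have htqB : t q = B := Subtype.ext hq
      rw [← htqB, Function.update_eq_self]
    · intro z hz
      rcases (hmemPr z).1 hz with ⟨hz1, hz2⟩
      have hmem2 : Function.update z.1 z.2 B ∈ T2 := hupd12 z.1 hz1 z.2 hz2
      have hq2 : ((Function.update z.1 z.2 B) z.2).1 = eB k := by rw [Function.update_self]
      have hall : ∀ j', ((Function.update z.1 z.2 B) j').1 = eB k → j' = z.2 := by
        have hcb : (Finset.univ.filter
            fun i => ((Function.update z.1 z.2 B) i).1 = eB k).card = 1 := by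
          rw [hcnt2 _ hmem2 (eB k), hγb, vunit_ne (fun h => eA_ne_eB k h.symm), vunit_same]
        rcases count_one_unique _ hcb with ⟨q0, hq0, hq0u⟩
        intro j' hj'
        rw [hq0u j' hj', ← hq0u z.2 hq2]
      have hATA : z.1 z.2 = A := Subtype.ext hz2
      rw [posOf_spec hd0 _ hq2 hall, Function.update_idem, ← hATA,
        Function.update_eq_self]
  have hI2 : ∑ z ∈ Pr, pweight n d z.1 = 2 * ∑ t ∈ T1, pweight n d t := by
    rw [hPrdef, Finset.sum_filter, Finset.sum_product, Finset.mul_sum]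
    apply Finset.sum_congr rfl
    intro t' ht'
    dsimp only
    rw [← Finset.sum_filter, Finset.sum_const, hcnt1 t' ht' (eA k), hγa, vunit_same,
      nsmul_eq_mul]
    norm_num
  -- per-tuple inequality
  have key : ∀ t ∈ T2, 0 ≤ pweight n d (Function.update t (posOf hd0 t (eB k)) A)
      - 2 * pweight n d t + pweight n d (Function.update t (posOf hd0 t (eB k)) C) := by
    intro t ht
    rcases hstruct2 t ht with ⟨p, q, hpq, hp, hq, hpu, hqu, ho⟩
    rw [posOf_spec hd0 t hq hqu]
    have := key_ineq t p q hpq hp hq ho A C hA1 hC1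
    linarith
  rw [← hI2, hI1, hII, Finset.mul_sum, ← Finset.sum_sub_distrib, ← Finset.sum_add_distrib]
  exact Finset.sum_nonneg key
end

section
/- Fix integers k ≥ 0 and n ≥ k+4, and let A be a real symmetric matrix indexed by the 2-element subsets of [n] that is S_{n−k}-invariant (i.e., A_{σ·e,σ·f} = A_{e,f} for all σ ∈ S_{n−k} and all 2-subsets e, f of [n]). Then A is positive semidefinite if and only if the three matrices U_1ᵀ A U_1, U_2ᵀ A U_2 and U_3ᵀ A U_3 are positive semidefinite. -/
open Finset Matrix

/-- `σ` belongs to the subgroup `S_{n-k} ≤ S_n` (inside `Perm ℕ`): it fixes every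
element of `[k]` pointwise and every element outside `[n]`. -/
def FixPerm (n k : ℕ) (σ : Equiv.Perm ℕ) : Prop :=
  (∀ i ∈ Finset.Icc 1 k, σ i = i) ∧ (∀ i, i ∉ Finset.Icc 1 n → σ i = i)

/-- The action of a permutation of `[n]` on an edge (2-subset) of `[n]`. -/
def permEdge (n : ℕ) (σ : Equiv.Perm ℕ) (g : ↥(edgesN n)) : ↥(edgesN n) :=
  if h : g.1.image σ ∈ edgesN n then ⟨g.1.image σ, h⟩ else g

/-- The standard basis vector `v_e` of `ℝ^{edgesN n}` (extended by `e : Finset ℕ`). -/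
def vN (n : ℕ) (e : Finset ℕ) : ↥(edgesN n) → ℝ := fun g => if g.1 = e then 1 else 0

/-- The matrix `U₁` whose columns are the vectors `u_{1,1}, …, u_{1,C(k,2)+k+1}`:
`v_e` for the 2-subsets `e` of `[k]`; `Σ_{i=k+1}^n v_{{j,i}}` for `j ∈ [k]`; and
`Σ_{k+1≤i<j≤n} v_{{i,j}}`. -/
noncomputable def U1 (k n : ℕ) :
    Matrix ↥(edgesN n) (↥(edgesN k) ⊕ ↥(Finset.Icc 1 k) ⊕ Unit) ℝ :=
  Matrix.of fun g c => match c with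
  | .inl e => vN n e.1 g
  | .inr (.inl j) => ∑ i ∈ Finset.Icc (k+1) n, vN n {j.1, i} g
  | .inr (.inr _) => ∑ e ∈ (Finset.Icc (k+1) n).powersetCard 2, vN n e g

/-- The matrix `U₂` whose columns are `u_{2,1}, …, u_{2,k+1}`:
`v_{{j,k+1}} − v_{{j,k+2}}` for `j ∈ [k]`, and `Σ_{i=k+3}^n (v_{{k+1,i}} − v_{{k+2,i}})`. -/
noncomputable def U2 (k n : ℕ) : Matrix ↥(edgesN n) (↥(Finset.Icc 1 k) ⊕ Unit) ℝ :=
  Matrix.of fun g c => match c with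
  | .inl j => vN n {j.1, k+1} g - vN n {j.1, k+2} g
  | .inr _ => ∑ i ∈ Finset.Icc (k+3) n, (vN n {k+1, i} g - vN n {k+2, i} g)

/-- The one-column matrix `U₃` with column
`u_{3,1} = v_{{k+1,k+2}} − v_{{k+1,k+3}} − v_{{k+2,k+4}} + v_{{k+3,k+4}}`. -/
noncomputable def U3 (k n : ℕ) : Matrix ↥(edgesN n) Unit ℝ :=
  Matrix.of fun g _ =>
    vN n {k+1, k+2} g - vN n {k+1, k+3} g - vN n {k+2, k+4} g + vN n {k+3, k+4} g

/-!
Write `V = {k+1, …, n}`, `m = n - k`, and let `S_{n-k}` act on `V`. As a representation,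
`ℝ^E` is the sum of the invariant vectors (spanned by the columns of `U₁`), of `k + 1` copies
of the standard module `{y ∈ ℝ^V | ∑ y = 0}` (one on the edges `{j, a}` for each `j ∈ [k]`,
one on the edges inside `V` through `y ↦ (e ↦ ∑_{a ∈ e} y a)`), and of the Johnson vectors of
zero degree, which form the Specht module `S^{(m-2,2)}`. Since `A` is invariant, the quadratic
form of `A` has no cross terms between these pieces, it acts on the copies of the standard
module through the matrix `U₂ᵀ A U₂ / 2`, and on the last piece by the scalar `U₃ᵀ A U₃ / 4`.
Instead of Schur's lemma, each of these facts is obtained by moving configurations of at most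
four points of `V` onto each other with a permutation fixing `[k]`.
-/

theorem Matrix.toBilin'_comp_equiv {ι R : Type*} [Fintype ι] [DecidableEq ι] [CommSemiring R]
    (A : Matrix ι ι R) (π : ι ≃ ι) (hA : ∀ i j, A (π i) (π j) = A i j) (x y : ι → R) :
    toBilin' A (x ∘ π) (y ∘ π) = toBilin' A x y := by
  simp only [toBilin'_apply, Function.comp_apply]
  calc ∑ i, ∑ j, x (π i) * A i j * y (π j) = ∑ i, ∑ j, x (π i) * A (π i) (π j) * y (π j) := by
        simp only [hA]
    _ = ∑ i, ∑ j, x (π i) * A (π i) j * y j := by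
        congr! 1 with i
        exact Equiv.sum_comp π fun j => x (π i) * A (π i) j * y j
    _ = _ := Equiv.sum_comp π fun i => ∑ j, x i * A i j * y j

theorem Matrix.toBilin'_mulVec_mulVec {ι κ R : Type*} [Fintype ι] [DecidableEq ι] [Fintype κ]
    [DecidableEq κ] [CommSemiring R] (A : Matrix ι ι R) (U : Matrix ι κ R) (c d : κ → R) :
    toBilin' A (U *ᵥ c) (U *ᵥ d) = toBilin' (Uᵀ * A * U) c d := by
  rw [← toBilin'_comp]
  rfl

theorem Matrix.transpose_mul_mul_apply_eq_toBilin' {ι κ R : Type*} [Fintype ι] [DecidableEq ι]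
    [Fintype κ] [DecidableEq κ] [CommSemiring R] (A : Matrix ι ι R) (U : Matrix ι κ R) (i j : κ) :
    (Uᵀ * A * U) i j = toBilin' A (U.col i) (U.col j) := by
  rw [← toBilin'_single (Uᵀ * A * U) i j, ← toBilin'_mulVec_mulVec, mulVec_single_one,
    mulVec_single_one]

theorem Matrix.toBilin'_comm_of_isSymm {ι : Type*} [Fintype ι] [DecidableEq ι] {A : Matrix ι ι ℝ}
    (hA : A.IsSymm) (x y : ι → ℝ) : toBilin' A x y = toBilin' A y x := by
  rw [toBilin'_apply', toBilin'_apply', dotProduct_mulVec, ← hA.eq, vecMul_transpose,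
    dotProduct_comm, hA.eq]

theorem Matrix.toBilin'_add_add_self_of_isSymm {ι : Type*} [Fintype ι] [DecidableEq ι]
    {A : Matrix ι ι ℝ} (hA : A.IsSymm) {x y z : ι → ℝ} (hxy : toBilin' A x y = 0)
    (hxz : toBilin' A x z = 0) (hyz : toBilin' A y z = 0) :
    toBilin' A (x + y + z) (x + y + z) = toBilin' A x x + toBilin' A y y + toBilin' A z z := by
  simp only [map_add, LinearMap.add_apply, toBilin'_comm_of_isSymm hA y x,
    toBilin'_comm_of_isSymm hA z x, toBilin'_comm_of_isSymm hA z y, hxy, hxz, hyz]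
  ring

theorem Matrix.PosSemidef.toBilin'_self_nonneg {ι : Type*} [Fintype ι] [DecidableEq ι]
    {M : Matrix ι ι ℝ} (hM : M.PosSemidef) (x : ι → ℝ) : 0 ≤ toBilin' M x x := by
  simpa [toBilin'_apply'] using hM.dotProduct_mulVec_nonneg x

theorem Matrix.posSemidef_of_toBilin'_nonneg {ι : Type*} [Fintype ι] [DecidableEq ι]
    {A : Matrix ι ι ℝ} (hA : A.IsSymm) (h : ∀ x, 0 ≤ toBilin' A x x) : A.PosSemidef :=
  PosSemidef.of_dotProduct_mulVec_nonneg (by simpa [IsHermitian] using hA.eq)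
    fun x => by simpa [toBilin'_apply'] using h x

theorem Matrix.PosSemidef.transpose_mul_mul_same {ι κ : Type*} [Fintype ι] [Fintype κ]
    {A : Matrix ι ι ℝ} (hA : A.PosSemidef) (U : Matrix ι κ ℝ) : (Uᵀ * A * U).PosSemidef := by
  simpa using hA.conjTranspose_mul_mul_same U

theorem Finset.pair_eq_pair_iff {α : Type*} [DecidableEq α] {a b c d : α} :
    ({a, b} : Finset α) = {c, d} ↔ a = c ∧ b = d ∨ a = d ∧ b = c := by
  rw [← coe_inj, coe_pair, coe_pair, Set.pair_eq_pair_iff]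

theorem Finset.sum_mul_eq_zero_of_forall_eq {ι : Type*} {s : Finset ι} {y f : ι → ℝ}
    (hy : ∑ a ∈ s, y a = 0) (hf : ∀ a ∈ s, ∀ b ∈ s, f a = f b) : ∑ a ∈ s, y a * f a = 0 := by
  rcases s.eq_empty_or_nonempty with rfl | ⟨b, hb⟩
  · exact sum_empty
  · rw [sum_congr rfl fun a ha => by rw [hf a ha b hb], ← sum_mul, hy, zero_mul]

theorem fixPerm_iff {n k : ℕ} {σ : Equiv.Perm ℕ} :
    FixPerm n k σ ↔ ∀ x ∉ Icc (k + 1) n, σ x = x := by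
  simp only [FixPerm, mem_Icc]
  refine ⟨fun ⟨h1, h2⟩ x hx => ?_,
    fun h => ⟨fun x hx => h x (by omega), fun x hx => h x (by omega)⟩⟩
  by_cases hx' : 1 ≤ x ∧ x ≤ n
  · exact h1 x (by omega)
  · exact h2 x hx'

namespace FixPerm

variable {k n : ℕ} {σ τ : Equiv.Perm ℕ}

theorem one : FixPerm n k 1 := fixPerm_iff.2 fun _ _ => rfl

theorem mul (hσ : FixPerm n k σ) (hτ : FixPerm n k τ) : FixPerm n k (σ * τ) :=
  fixPerm_iff.2 fun x hx => by
    rw [Equiv.Perm.mul_apply, fixPerm_iff.1 hτ x hx, fixPerm_iff.1 hσ x hx]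

theorem swap {a b : ℕ} (ha : a ∈ Icc (k + 1) n) (hb : b ∈ Icc (k + 1) n) :
    FixPerm n k (Equiv.swap a b) :=
  fixPerm_iff.2 fun _ hx => Equiv.swap_apply_of_ne_of_ne (by rintro rfl; exact hx ha)
    (by rintro rfl; exact hx hb)

theorem apply_mem_iff (hσ : FixPerm n k σ) {x : ℕ} :
    σ x ∈ Icc (k + 1) n ↔ x ∈ Icc (k + 1) n := by
  rw [fixPerm_iff] at hσ
  by_cases hx : x ∈ Icc (k + 1) n
  · refine iff_of_true (by_contra fun h => ?_) hx
    have hfix : σ x = x := σ.injective (hσ _ h)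
    exact h (by rwa [hfix])
  · rw [hσ x hx]

theorem image_mem_edgesN (hσ : FixPerm n k σ) {e : Finset ℕ} (he : e ∈ edgesN n) :
    e.image σ ∈ edgesN n := by
  rw [edgesN, mem_powersetCard] at he ⊢
  refine ⟨image_subset_iff.2 fun x hx => ?_, by rw [card_image_of_injective _ σ.injective, he.2]⟩
  by_cases hxV : x ∈ Icc (k + 1) n
  · exact Icc_subset_Icc_left (by omega) (hσ.apply_mem_iff.2 hxV)
  · rw [fixPerm_iff.1 hσ x hxV]
    exact he.1 hx

theorem permEdge_val (hσ : FixPerm n k σ) (g : edgesN n) :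
    (permEdge n σ g : Finset ℕ) = g.1.image σ := by
  rw [permEdge, dif_pos (hσ.image_mem_edgesN g.2)]

theorem bijective_permEdge (hσ : FixPerm n k σ) : Function.Bijective (permEdge n σ) :=
  Finite.injective_iff_bijective.1 fun g h hgh => Subtype.ext <|
    image_injective σ.injective <| by rw [← hσ.permEdge_val, ← hσ.permEdge_val, hgh]

end FixPerm

namespace EdgeMatrix

variable {k n : ℕ}

theorem exists_fixPerm_map : ∀ l l' : List ℕ, l.Nodup → l'.Nodup → l.length = l'.length →
    (∀ a ∈ l, a ∈ Icc (k + 1) n) → (∀ a ∈ l', a ∈ Icc (k + 1) n) →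
    ∃ σ, FixPerm n k σ ∧ l.map σ = l'
  | [], [], _, _, _, _, _ => ⟨1, FixPerm.one, rfl⟩
  | [], _ :: _, _, _, hlen, _, _ | _ :: _, [], _, _, hlen, _, _ => by simp at hlen
  | x :: l, x' :: l', hl, hl', hlen, hV, hV' => by
    rw [List.nodup_cons] at hl hl'
    obtain ⟨τ, hτ, hmap⟩ := exists_fixPerm_map l l' hl.2 hl'.2 (by simpa using hlen)
      (fun a ha => hV a (List.mem_cons_of_mem _ ha))
      (fun a ha => hV' a (List.mem_cons_of_mem _ ha))
    have hτx : τ x ∈ Icc (k + 1) n := hτ.apply_mem_iff.2 (hV x List.mem_cons_self)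
    refine ⟨Equiv.swap (τ x) x' * τ, (FixPerm.swap hτx (hV' x' List.mem_cons_self)).mul hτ, ?_⟩
    have hfix : ∀ y ∈ l, (Equiv.swap (τ x) x' * τ) y = τ y := fun y hy =>
      Equiv.swap_apply_of_ne_of_ne (fun h => hl.1 (τ.injective h ▸ hy))
        (fun h => hl'.1 (h ▸ hmap ▸ List.mem_map_of_mem hy))
    rw [List.map_cons, List.map_congr_left hfix, hmap, Equiv.Perm.mul_apply,
      Equiv.swap_apply_left]

theorem add_mem_Icc {i : ℕ} (hi : 1 ≤ i) (hin : k + i ≤ n) : k + i ∈ Icc (k + 1) n :=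
  mem_Icc.2 ⟨by omega, hin⟩

def johnsonEdges (k n : ℕ) : Finset (Finset ℕ) := (Icc (k + 1) n).powersetCard 2

theorem mem_johnsonEdges {e : Finset ℕ} :
    e ∈ johnsonEdges k n ↔ e ⊆ Icc (k + 1) n ∧ #e = 2 := mem_powersetCard

theorem pair_mem_johnsonEdges {a b : ℕ} (ha : a ∈ Icc (k + 1) n) (hb : b ∈ Icc (k + 1) n)
    (hab : a ≠ b) : {a, b} ∈ johnsonEdges k n :=
  mem_johnsonEdges.2 ⟨by simp [insert_subset_iff, ha, hb], card_pair hab⟩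

theorem exists_eq_pair_of_mem {e : Finset ℕ} (he : e ∈ johnsonEdges k n) {a : ℕ} (ha : a ∈ e) :
    ∃ b ∈ Icc (k + 1) n, a ≠ b ∧ e = {a, b} := by
  obtain ⟨hsub, hcard⟩ := mem_johnsonEdges.1 he
  obtain ⟨b, hb⟩ := card_eq_one.1 (by rw [card_erase_of_mem ha, hcard] : #(e.erase a) = 1)
  have hbe : b ∈ e.erase a := hb ▸ mem_singleton_self b
  refine ⟨b, hsub (mem_of_mem_erase hbe), (ne_of_mem_erase hbe).symm, ?_⟩
  rw [← insert_erase ha, hb]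

theorem exists_eq_pair {e : Finset ℕ} (he : e ∈ johnsonEdges k n) :
    ∃ a ∈ Icc (k + 1) n, ∃ b ∈ Icc (k + 1) n, a ≠ b ∧ e = {a, b} := by
  obtain ⟨a, ha⟩ := card_pos.1 (by rw [(mem_johnsonEdges.1 he).2]; omega : 0 < #e)
  exact ⟨a, (mem_johnsonEdges.1 he).1 ha, exists_eq_pair_of_mem he ha⟩

theorem image_mem_johnsonEdges_iff {σ : Equiv.Perm ℕ} (hσ : FixPerm n k σ)
    {e : Finset ℕ} : e.image σ ∈ johnsonEdges k n ↔ e ∈ johnsonEdges k n := by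
  simp only [johnsonEdges, mem_powersetCard, card_image_of_injective _ σ.injective, subset_iff,
    forall_mem_image, hσ.apply_mem_iff]

theorem sum_filter_mem_johnsonEdges {M : Type*} [AddCommMonoid M] {a : ℕ}
    (ha : a ∈ Icc (k + 1) n) (F : Finset ℕ → M) :
    ∑ e ∈ johnsonEdges k n with a ∈ e, F e = ∑ b ∈ (Icc (k + 1) n).erase a, F {a, b} := by
  have himage : {e ∈ johnsonEdges k n | a ∈ e}
      = ((Icc (k + 1) n).erase a).image fun b => ({a, b} : Finset ℕ) := by
    ext e
    simp only [mem_filter, mem_image, mem_erase]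
    constructor
    · rintro ⟨he, hae⟩
      obtain ⟨b, hb, hab, rfl⟩ := exists_eq_pair_of_mem he hae
      exact ⟨b, ⟨hab.symm, hb⟩, rfl⟩
    · rintro ⟨b, ⟨hba, hb⟩, rfl⟩
      exact ⟨pair_mem_johnsonEdges ha hb hba.symm, mem_insert_self a {b}⟩
  rw [himage, sum_image fun b hb b' hb' h => ?_]
  rw [mem_coe, mem_erase] at hb hb'
  rcases pair_eq_pair_iff.1 h with ⟨-, h⟩ | ⟨h, -⟩
  · exact h
  · exact absurd h.symm hb'.1

theorem edgesN_eq_union (hk : k ≤ n) :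
    edgesN n = edgesN k ∪ ((Icc 1 k ×ˢ Icc (k + 1) n).image (fun p => ({p.1, p.2} : Finset ℕ))
      ∪ johnsonEdges k n) := by
  ext e
  simp only [mem_union, edgesN, johnsonEdges, mem_image, mem_product, mem_powersetCard,
    Prod.exists]
  constructor
  · rintro ⟨hsub, hcard⟩
    obtain ⟨a, b, hab, rfl⟩ := card_eq_two.1 hcard
    simp only [insert_subset_iff, singleton_subset_iff, mem_Icc, card_pair hab, and_true]
      at hsub ⊢
    by_cases ha : a ≤ k <;> by_cases hb : b ≤ k
    · exact Or.inl ⟨⟨hsub.1.1, ha⟩, hsub.2.1, hb⟩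
    · exact Or.inr (Or.inl ⟨a, b, ⟨⟨hsub.1.1, ha⟩, by omega, hsub.2.2⟩, rfl⟩)
    · exact Or.inr (Or.inl ⟨b, a, ⟨⟨hsub.2.1, hb⟩, by omega, hsub.1.2⟩, pair_comm b a⟩)
    · exact Or.inr (Or.inr ⟨⟨by omega, hsub.1.2⟩, by omega, hsub.2.2⟩)
  · rintro (⟨hsub, hcard⟩ | ⟨j, a, ⟨hj, ha⟩, rfl⟩ | ⟨hsub, hcard⟩)
    · exact ⟨hsub.trans (Icc_subset_Icc_right hk), hcard⟩
    · simp only [mem_Icc] at hj ha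
      exact ⟨by simp only [insert_subset_iff, mem_Icc, singleton_subset_iff]; omega,
        card_pair (by omega)⟩
    · exact ⟨hsub.trans (Icc_subset_Icc_left (by omega)), hcard⟩

theorem sum_edgesN_eq {M : Type*} [AddCommMonoid M] (hk : k ≤ n) (F : Finset ℕ → M) :
    ∑ e ∈ edgesN n, F e = ∑ e ∈ edgesN k, F e
      + ∑ j ∈ Icc 1 k, ∑ a ∈ Icc (k + 1) n, F {j, a} + ∑ e ∈ johnsonEdges k n, F e := by
  set mixed := (Icc 1 k ×ˢ Icc (k + 1) n).image fun p => ({p.1, p.2} : Finset ℕ)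
  have hmixed : ∑ e ∈ mixed, F e = ∑ j ∈ Icc 1 k, ∑ a ∈ Icc (k + 1) n, F {j, a} := by
    rw [sum_image, sum_product]
    rintro ⟨j, a⟩ hp ⟨j', a'⟩ hp' h
    simp only [coe_product, Set.mem_prod, mem_coe, mem_Icc] at hp hp'
    rcases pair_eq_pair_iff.1 h with ⟨rfl, rfl⟩ | ⟨h1, h2⟩
    · rfl
    · omega
  have hdisj_mixed : Disjoint mixed (johnsonEdges k n) := by
    refine disjoint_left.2 fun e he hJ => ?_
    obtain ⟨⟨j, a⟩, hp, rfl⟩ := mem_image.1 he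
    have := (mem_johnsonEdges.1 hJ).1 (mem_insert_self j {a})
    simp only [mem_product, mem_Icc] at hp this
    omega
  have hdisj_K : Disjoint (edgesN k) (mixed ∪ johnsonEdges k n) := by
    refine disjoint_left.2 fun e hK h => ?_
    obtain ⟨x, hx⟩ := card_pos.1 (by rw [(mem_powersetCard.1 hK).2]; omega : 0 < #e)
    have hxk := (mem_powersetCard.1 hK).1 hx
    rcases mem_union.1 h with hM | hJ
    · obtain ⟨⟨j, a⟩, hp, rfl⟩ := mem_image.1 hM
      have := (mem_powersetCard.1 hK).1 (mem_insert_of_mem (mem_singleton_self a))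
      simp only [mem_product, mem_Icc] at hp this
      omega
    · have := (mem_johnsonEdges.1 hJ).1 hx
      simp only [mem_Icc] at hxk this
      omega
  rw [edgesN_eq_union hk, sum_union hdisj_K, sum_union hdisj_mixed, hmixed, add_assoc]

def degree (k n : ℕ) (c : Finset ℕ → ℝ) (a : ℕ) : ℝ := ∑ e ∈ johnsonEdges k n with a ∈ e, c e

theorem sum_degree (c : Finset ℕ → ℝ) :
    ∑ a ∈ Icc (k + 1) n, degree k n c a = 2 * ∑ e ∈ johnsonEdges k n, c e := by
  simp only [degree, sum_filter]
  rw [sum_comm, mul_sum]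
  refine sum_congr rfl fun e he => ?_
  rw [← sum_filter, filter_mem_eq_inter, inter_eq_right.2 (mem_johnsonEdges.1 he).1,
    sum_const, (mem_johnsonEdges.1 he).2, two_smul, two_mul]

theorem sum_eq_zero_of_degree_eq_zero {c : Finset ℕ → ℝ}
    (hc : ∀ a ∈ Icc (k + 1) n, degree k n c a = 0) : ∑ e ∈ johnsonEdges k n, c e = 0 := by
  have h := sum_degree (k := k) (n := n) c
  rw [sum_eq_zero hc] at h
  linarith

theorem sum_johnsonEdges_row {a b : ℕ} (ha : a ∈ Icc (k + 1) n) (hb : b ∈ Icc (k + 1) n)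
    (hab : a ≠ b) {c : Finset ℕ → ℝ} (hc : ∀ x ∈ Icc (k + 1) n, degree k n c x = 0)
    (α β γ : ℝ) :
    ∑ f ∈ johnsonEdges k n, (if f = {a, b} then α else if a ∈ f ∨ b ∈ f then β else γ) * c f
      = (α - 2 * β + γ) * c {a, b} := by
  have hpt : ∀ f ∈ johnsonEdges k n,
      (if f = {a, b} then α else if a ∈ f ∨ b ∈ f then β else γ)
        = γ + (β - γ) * ((if a ∈ f then 1 else 0) + (if b ∈ f then 1 else 0))
          + (α - 2 * β + γ) * (if f = {a, b} then 1 else 0) := by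
    intro f hf
    by_cases hfe : f = {a, b}
    · simp only [hfe, ↓reduceIte, mem_insert, mem_singleton, true_or, or_true, mul_one]
      ring
    · have hnot : ¬(a ∈ f ∧ b ∈ f) := fun h => hfe <| (eq_of_subset_of_card_le
        (by simp [insert_subset_iff, h]) (by rw [card_pair hab, (mem_johnsonEdges.1 hf).2])).symm
      by_cases haf : a ∈ f <;> by_cases hbf : b ∈ f <;> simp_all
  rw [sum_congr rfl fun f hf => by rw [hpt f hf]]
  simp only [add_mul, sum_add_distrib, mul_assoc, ← mul_sum, ite_mul, one_mul, zero_mul,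
    ← sum_filter]
  rw [sum_eq_zero_of_degree_eq_zero hc,
    show ∑ f ∈ johnsonEdges k n with a ∈ f, c f = 0 from hc a ha, show ∑ f ∈ johnsonEdges k n with b ∈ f, c f = 0 from hc b hb, filter_eq',
    if_pos (pair_mem_johnsonEdges ha hb hab), sum_singleton]
  ring

noncomputable def johnsonVec (k n : ℕ) (c : Finset ℕ → ℝ) : edgesN n → ℝ :=
  ∑ e ∈ johnsonEdges k n, c e • vN n e

theorem johnsonVec_apply (c : Finset ℕ → ℝ) (g : edgesN n) :
    johnsonVec k n c g = if g.1 ∈ johnsonEdges k n then c g.1 else 0 := by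
  simp [johnsonVec, vN, Finset.sum_apply]

theorem johnsonVec_mem_eq_sum {a : ℕ} (ha : a ∈ Icc (k + 1) n) :
    johnsonVec k n (fun e => if a ∈ e then 1 else 0)
      = ∑ b ∈ (Icc (k + 1) n).erase a, vN n {a, b} := by
  rw [johnsonVec, ← sum_filter_mem_johnsonEdges ha]
  simp [sum_filter]

/-- `pointVec k n p a` is the image of the point `a ∈ V` in the `p`-th copy of the permutation
module `ℝ^V`: the edge `{j, a}` for `p = inl j`, and the star of edges at `a` inside `V` for
`p = inr ()`. -/
noncomputable def pointVec (k n : ℕ) : ↥(Icc 1 k) ⊕ Unit → ℕ → edgesN n → ℝ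
  | .inl j, a => vN n {j.1, a}
  | .inr _, a => johnsonVec k n fun e => if a ∈ e then 1 else 0

noncomputable def stdVec (k n : ℕ) (p : ↥(Icc 1 k) ⊕ Unit) (y : ℕ → ℝ) : edgesN n → ℝ :=
  ∑ a ∈ Icc (k + 1) n, y a • pointVec k n p a

def coord (x : edgesN n → ℝ) (e : Finset ℕ) : ℝ := if h : e ∈ edgesN n then x ⟨e, h⟩ else 0

theorem sum_coord_smul_vN (x : edgesN n → ℝ) : ∑ e ∈ edgesN n, coord x e • vN n e = x := by
  ext g
  simp only [Finset.sum_apply, Pi.smul_apply, smul_eq_mul, vN, mul_ite, mul_one, mul_zero,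
    sum_ite_eq, if_pos g.2, coord, dif_pos g.2]

theorem vN_image_comp_permEdge {σ : Equiv.Perm ℕ} (hσ : FixPerm n k σ) (e : Finset ℕ) :
    vN n (e.image σ) ∘ permEdge n σ = vN n e := by
  ext g
  simp [vN, hσ.permEdge_val, (image_injective σ.injective).eq_iff]

theorem johnsonVec_comp_permEdge {σ : Equiv.Perm ℕ} (hσ : FixPerm n k σ) (c : Finset ℕ → ℝ) :
    johnsonVec k n c ∘ permEdge n σ = johnsonVec k n fun e => c (e.image σ) := by
  ext g
  simp [johnsonVec_apply, hσ.permEdge_val, image_mem_johnsonEdges_iff hσ]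

theorem pointVec_comp_permEdge {σ : Equiv.Perm ℕ} (hσ : FixPerm n k σ) (p : ↥(Icc 1 k) ⊕ Unit)
    (a : ℕ) : pointVec k n p (σ a) ∘ permEdge n σ = pointVec k n p a := by
  rcases p with j | _
  · have hj : σ j = j := hσ.1 j j.2
    have h := vN_image_comp_permEdge hσ {j.1, a}
    rwa [image_insert, image_singleton, hj] at h
  · simp only [pointVec, johnsonVec_comp_permEdge hσ, σ.injective.mem_finset_image]

theorem U1_permEdge {σ : Equiv.Perm ℕ} (hσ : FixPerm n k σ) (g : edgesN n)
    (c : ↥(edgesN k) ⊕ ↥(Icc 1 k) ⊕ Unit) : U1 k n (permEdge n σ g) c = U1 k n g c := by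
  rcases c with e | j | _
  · have he : e.1.image σ = e.1 := by
      refine (image_congr fun x hx => hσ.1 x ?_).trans image_id
      exact (mem_powersetCard.1 e.2).1 hx
    exact congrFun (he ▸ vN_image_comp_permEdge hσ e.1) g
  · change ∑ a ∈ Icc (k + 1) n, pointVec k n (.inl j) a (permEdge n σ g)
      = ∑ a ∈ Icc (k + 1) n, pointVec k n (.inl j) a g
    rw [← Equiv.Perm.sum_comp σ _ _ fun a ha => by_contra fun h => ha (fixPerm_iff.1 hσ a h)]
    exact sum_congr rfl fun a _ => congrFun (pointVec_comp_permEdge hσ _ a) g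
  · have h := congrFun (johnsonVec_comp_permEdge hσ fun _ => 1) g
    simpa [johnsonVec, johnsonEdges, Finset.sum_apply, U1] using h

theorem U1_mulVec_comp_permEdge {σ : Equiv.Perm ℕ} (hσ : FixPerm n k σ)
    (c : ↥(edgesN k) ⊕ ↥(Icc 1 k) ⊕ Unit → ℝ) : (U1 k n *ᵥ c) ∘ permEdge n σ = U1 k n *ᵥ c := by
  ext g
  simp only [Function.comp_apply, mulVec, dotProduct, U1_permEdge hσ]

def IsInvariant (k n : ℕ) (A : Matrix (edgesN n) (edgesN n) ℝ) : Prop :=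
  ∀ σ : Equiv.Perm ℕ, FixPerm n k σ →
    ∀ e f : edgesN n, A (permEdge n σ e) (permEdge n σ f) = A e f

variable {A : Matrix (edgesN n) (edgesN n) ℝ}

theorem IsInvariant.toBilin'_comp (hA : IsInvariant k n A) {σ : Equiv.Perm ℕ}
    (hσ : FixPerm n k σ) (x y : edgesN n → ℝ) :
    toBilin' A (x ∘ permEdge n σ) (y ∘ permEdge n σ) = toBilin' A x y :=
  toBilin'_comp_equiv A (Equiv.ofBijective _ hσ.bijective_permEdge) (hA σ hσ) x y

theorem IsInvariant.toBilin'_vN_image (hA : IsInvariant k n A) {σ : Equiv.Perm ℕ}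
    (hσ : FixPerm n k σ) (e f : Finset ℕ) :
    toBilin' A (vN n (e.image σ)) (vN n (f.image σ)) = toBilin' A (vN n e) (vN n f) := by
  rw [← hA.toBilin'_comp hσ, vN_image_comp_permEdge hσ, vN_image_comp_permEdge hσ]

theorem IsInvariant.toBilin'_pointVec_vN (hA : IsInvariant k n A) {σ : Equiv.Perm ℕ}
    (hσ : FixPerm n k σ) (p : ↥(Icc 1 k) ⊕ Unit) (a : ℕ) (e : Finset ℕ) :
    toBilin' A (pointVec k n p (σ a)) (vN n (e.image σ))
      = toBilin' A (pointVec k n p a) (vN n e) := by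
  rw [← hA.toBilin'_comp hσ, pointVec_comp_permEdge hσ, vN_image_comp_permEdge hσ]

theorem IsInvariant.toBilin'_pointVec_eq (hA : IsInvariant k n A) {u : edgesN n → ℝ}
    (hu : ∀ σ, FixPerm n k σ → u ∘ permEdge n σ = u) (p : ↥(Icc 1 k) ⊕ Unit) {a b : ℕ}
    (ha : a ∈ Icc (k + 1) n) (hb : b ∈ Icc (k + 1) n) :
    toBilin' A u (pointVec k n p a) = toBilin' A u (pointVec k n p b) := by
  obtain ⟨σ, hσ, hmap⟩ := exists_fixPerm_map (k := k) (n := n) [b] [a] (by simp) (by simp) rfl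
    (by simpa using hb) (by simpa using ha)
  simp only [List.map_cons, List.map_nil, List.cons.injEq, and_true] at hmap
  rw [← hmap, ← hA.toBilin'_comp hσ, hu σ hσ, pointVec_comp_permEdge hσ]

theorem IsInvariant.toBilin'_vN_eq (hA : IsInvariant k n A) {u : edgesN n → ℝ}
    (hu : ∀ σ, FixPerm n k σ → u ∘ permEdge n σ = u) {e f : Finset ℕ}
    (he : e ∈ johnsonEdges k n) (hf : f ∈ johnsonEdges k n) :
    toBilin' A u (vN n e) = toBilin' A u (vN n f) := by
  obtain ⟨a, ha, b, hb, hab, rfl⟩ := exists_eq_pair he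
  obtain ⟨c, hc, d, hd, hcd, rfl⟩ := exists_eq_pair hf
  obtain ⟨σ, hσ, hmap⟩ := exists_fixPerm_map (k := k) (n := n) [c, d] [a, b] (by simpa using hcd)
    (by simpa using hab) rfl (by simpa using And.intro hc hd) (by simpa using And.intro ha hb)
  simp only [List.map_cons, List.map_nil, List.cons.injEq, and_true] at hmap
  have himage : ({a, b} : Finset ℕ) = ({c, d} : Finset ℕ).image σ := by simp [hmap]
  rw [himage, ← hA.toBilin'_comp hσ, hu σ hσ, vN_image_comp_permEdge hσ]

theorem IsInvariant.toBilin'_pointVec_pointVec_eq (hA : IsInvariant k n A)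
    (p q : ↥(Icc 1 k) ⊕ Unit) {a b a' b' : ℕ} (ha : a ∈ Icc (k + 1) n) (hb : b ∈ Icc (k + 1) n)
    (ha' : a' ∈ Icc (k + 1) n) (hb' : b' ∈ Icc (k + 1) n) (h : a = b ↔ a' = b') :
    toBilin' A (pointVec k n p a) (pointVec k n q b)
      = toBilin' A (pointVec k n p a') (pointVec k n q b') := by
  obtain ⟨σ, hσ, hσa, hσb⟩ : ∃ σ, FixPerm n k σ ∧ σ a' = a ∧ σ b' = b := by
    by_cases hab : a = b
    · obtain rfl := hab
      obtain rfl := h.1 rfl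
      obtain ⟨σ, hσ, hmap⟩ := exists_fixPerm_map (k := k) (n := n) [a'] [a] (by simp) (by simp)
        rfl (by simpa using ha') (by simpa using ha)
      simp only [List.map_cons, List.map_nil, List.cons.injEq, and_true] at hmap
      exact ⟨σ, hσ, hmap, hmap⟩
    · obtain ⟨σ, hσ, hmap⟩ := exists_fixPerm_map (k := k) (n := n) [a', b'] [a, b]
        (by simpa [← h] using hab) (by simpa using hab) rfl (by simpa using And.intro ha' hb')
        (by simpa using And.intro ha hb)
      simp only [List.map_cons, List.map_nil, List.cons.injEq, and_true] at hmap
      exact ⟨σ, hσ, hmap⟩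
  rw [← hσa, ← hσb, ← hA.toBilin'_comp hσ, pointVec_comp_permEdge hσ, pointVec_comp_permEdge hσ]

theorem IsInvariant.toBilin'_pointVec_vN_eq (hA : IsInvariant k n A) (p : ↥(Icc 1 k) ⊕ Unit)
    {a : ℕ} (ha : a ∈ Icc (k + 1) n) {f f' : Finset ℕ} (hf : f ∈ johnsonEdges k n)
    (hf' : f' ∈ johnsonEdges k n) (h : a ∈ f ↔ a ∈ f') :
    toBilin' A (pointVec k n p a) (vN n f) = toBilin' A (pointVec k n p a) (vN n f') := by
  obtain ⟨σ, hσ, hσa, hσf⟩ : ∃ σ, FixPerm n k σ ∧ σ a = a ∧ f'.image σ = f := by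
    by_cases haf : a ∈ f
    · obtain ⟨b, hb, hab, rfl⟩ := exists_eq_pair_of_mem hf haf
      obtain ⟨b', hb', hab', rfl⟩ := exists_eq_pair_of_mem hf' (h.1 haf)
      obtain ⟨σ, hσ, hmap⟩ := exists_fixPerm_map (k := k) (n := n) [a, b'] [a, b]
        (by simpa using hab') (by simpa using hab) rfl (by simpa using And.intro ha hb')
        (by simpa using And.intro ha hb)
      simp only [List.map_cons, List.map_nil, List.cons.injEq, and_true] at hmap
      exact ⟨σ, hσ, hmap.1, by simp [hmap]⟩
    · have haf' : a ∉ f' := h.not.1 haf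
      obtain ⟨b, hb, c, hc, hbc, rfl⟩ := exists_eq_pair hf
      obtain ⟨b', hb', c', hc', hbc', rfl⟩ := exists_eq_pair hf'
      simp only [mem_insert, mem_singleton, not_or] at haf haf'
      obtain ⟨σ, hσ, hmap⟩ := exists_fixPerm_map (k := k) (n := n) [a, b', c'] [a, b, c]
        (by simp [*]) (by simp [*]) rfl (by simpa using And.intro ha (And.intro hb' hc'))
        (by simpa using And.intro ha (And.intro hb hc))
      simp only [List.map_cons, List.map_nil, List.cons.injEq, and_true] at hmap
      exact ⟨σ, hσ, hmap.1, by simp [hmap]⟩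
  have h := hA.toBilin'_pointVec_vN hσ p a f'
  rwa [hσa, hσf] at h

theorem IsInvariant.toBilin'_vN_pair_vN (hA : IsInvariant k n A) (hn : k + 4 ≤ n) {a b : ℕ}
    (ha : a ∈ Icc (k + 1) n) (hb : b ∈ Icc (k + 1) n) (hab : a ≠ b) {f : Finset ℕ}
    (hf : f ∈ johnsonEdges k n) :
    toBilin' A (vN n {a, b}) (vN n f)
      = if f = {a, b} then toBilin' A (vN n {k + 1, k + 2}) (vN n {k + 1, k + 2})
        else if a ∈ f ∨ b ∈ f then toBilin' A (vN n {k + 1, k + 2}) (vN n {k + 1, k + 3})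
        else toBilin' A (vN n {k + 1, k + 2}) (vN n {k + 3, k + 4}) := by
  have hV : ∀ l : List ℕ, (∀ x ∈ l, k < x ∧ x ≤ k + 4) → ∀ x ∈ l, x ∈ Icc (k + 1) n :=
    fun l hl x hx => mem_Icc.2 ⟨(hl x hx).1, (hl x hx).2.trans hn⟩
  split_ifs with hfe hmem
  · obtain ⟨σ, hσ, hmap⟩ := exists_fixPerm_map (k := k) (n := n) [k + 1, k + 2] [a, b]
      (by simp) (by simpa using hab) rfl (hV _ (by simp)) (by simpa using And.intro ha hb)
    simp only [List.map_cons, List.map_nil, List.cons.injEq, and_true] at hmap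
    have he : ({a, b} : Finset ℕ) = ({k + 1, k + 2} : Finset ℕ).image σ := by simp [hmap]
    rw [hfe, he, hA.toBilin'_vN_image hσ]
  · wlog haf : a ∈ f generalizing a b
    · have h := this hb ha hab.symm (by rwa [pair_comm]) hmem.symm (hmem.resolve_left haf)
      rwa [pair_comm] at h
    obtain ⟨c, hc, hac, rfl⟩ := exists_eq_pair_of_mem hf haf
    have hbc : b ≠ c := by rintro rfl; exact hfe rfl
    obtain ⟨σ, hσ, hmap⟩ := exists_fixPerm_map (k := k) (n := n) [k + 1, k + 2, k + 3]
      [a, b, c] (by simp) (by simp [hab, hac, hbc]) rfl (hV _ (by simp))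
      (by simpa using And.intro ha (And.intro hb hc))
    simp only [List.map_cons, List.map_nil, List.cons.injEq, and_true] at hmap
    have he : ({a, b} : Finset ℕ) = ({k + 1, k + 2} : Finset ℕ).image σ := by simp [hmap]
    have hf : ({a, c} : Finset ℕ) = ({k + 1, k + 3} : Finset ℕ).image σ := by simp [hmap]
    rw [he, hf, hA.toBilin'_vN_image hσ]
  · obtain ⟨c, hc, d, hd, hcd, rfl⟩ := exists_eq_pair hf
    simp only [mem_insert, mem_singleton, not_or] at hmem
    obtain ⟨σ, hσ, hmap⟩ := exists_fixPerm_map (k := k) (n := n) [k + 1, k + 2, k + 3, k + 4]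
      [a, b, c, d] (by simp) (by simp [*]) rfl (hV _ (by simp))
      (by simpa using And.intro ha (And.intro hb (And.intro hc hd)))
    simp only [List.map_cons, List.map_nil, List.cons.injEq, and_true] at hmap
    have he : ({a, b} : Finset ℕ) = ({k + 1, k + 2} : Finset ℕ).image σ := by simp [hmap]
    have hf : ({c, d} : Finset ℕ) = ({k + 3, k + 4} : Finset ℕ).image σ := by simp [hmap]
    rw [he, hf, hA.toBilin'_vN_image hσ]

theorem IsInvariant.toBilin'_stdVec_eq_zero (hA : IsInvariant k n A) {u : edgesN n → ℝ}
    (hu : ∀ σ, FixPerm n k σ → u ∘ permEdge n σ = u) (p : ↥(Icc 1 k) ⊕ Unit) {y : ℕ → ℝ}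
    (hy : ∑ a ∈ Icc (k + 1) n, y a = 0) : toBilin' A u (stdVec k n p y) = 0 := by
  simp only [stdVec, map_sum, map_smul, smul_eq_mul]
  exact sum_mul_eq_zero_of_forall_eq hy fun a ha b hb => hA.toBilin'_pointVec_eq hu p ha hb

theorem IsInvariant.toBilin'_johnsonVec_eq_zero (hA : IsInvariant k n A) {u : edgesN n → ℝ}
    (hu : ∀ σ, FixPerm n k σ → u ∘ permEdge n σ = u) {c : Finset ℕ → ℝ}
    (hc : ∑ e ∈ johnsonEdges k n, c e = 0) : toBilin' A u (johnsonVec k n c) = 0 := by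
  simp only [johnsonVec, map_sum, map_smul, smul_eq_mul]
  exact sum_mul_eq_zero_of_forall_eq hc fun e he f hf => hA.toBilin'_vN_eq hu he hf

theorem IsInvariant.toBilin'_pointVec_johnsonVec (hA : IsInvariant k n A)
    (p : ↥(Icc 1 k) ⊕ Unit) {a : ℕ} (ha : a ∈ Icc (k + 1) n) {c : Finset ℕ → ℝ}
    (hc : ∀ b ∈ Icc (k + 1) n, degree k n c b = 0) :
    toBilin' A (pointVec k n p a) (johnsonVec k n c) = 0 := by
  have hdeg : ∑ f ∈ johnsonEdges k n with a ∈ f, c f = 0 := hc a ha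
  have hrest : ∑ f ∈ johnsonEdges k n with a ∉ f, c f = 0 := by
    have h := sum_filter_add_sum_filter_not (johnsonEdges k n) (a ∈ ·) c
    rw [hdeg, sum_eq_zero_of_degree_eq_zero hc] at h
    linarith
  simp only [johnsonVec, map_sum, map_smul, smul_eq_mul]
  rw [← sum_filter_add_sum_filter_not _ (a ∈ ·),
    sum_mul_eq_zero_of_forall_eq hdeg fun f hf f' hf' => ?_,
    sum_mul_eq_zero_of_forall_eq hrest fun f hf f' hf' => ?_, add_zero]
  · rw [mem_filter] at hf hf'
    exact hA.toBilin'_pointVec_vN_eq p ha hf.1 hf'.1 (iff_of_false hf.2 hf'.2)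
  · rw [mem_filter] at hf hf'
    exact hA.toBilin'_pointVec_vN_eq p ha hf.1 hf'.1 (iff_of_true hf.2 hf'.2)

theorem IsInvariant.toBilin'_stdVec_johnsonVec (hA : IsInvariant k n A)
    (p : ↥(Icc 1 k) ⊕ Unit) (y : ℕ → ℝ) {c : Finset ℕ → ℝ}
    (hc : ∀ b ∈ Icc (k + 1) n, degree k n c b = 0) :
    toBilin' A (stdVec k n p y) (johnsonVec k n c) = 0 := by
  simp only [stdVec, map_sum, map_smul, LinearMap.sum_apply, LinearMap.smul_apply, smul_eq_mul]
  exact sum_eq_zero fun a ha => by rw [hA.toBilin'_pointVec_johnsonVec p ha hc, mul_zero]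

/-- `A` acts on the `k + 1` copies of the standard module through the matrix `stdScalar A`. -/
noncomputable def stdScalar (A : Matrix (edgesN n) (edgesN n) ℝ) (p q : ↥(Icc 1 k) ⊕ Unit) : ℝ :=
  toBilin' A (pointVec k n p (k + 1)) (pointVec k n q (k + 1))
    - toBilin' A (pointVec k n p (k + 1)) (pointVec k n q (k + 2))

theorem IsInvariant.toBilin'_pointVec_pointVec (hA : IsInvariant k n A) (hn : k + 2 ≤ n)
    (p q : ↥(Icc 1 k) ⊕ Unit) {a b : ℕ} (ha : a ∈ Icc (k + 1) n) (hb : b ∈ Icc (k + 1) n) :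
    toBilin' A (pointVec k n p a) (pointVec k n q b)
      = toBilin' A (pointVec k n p (k + 1)) (pointVec k n q (k + 2))
        + if a = b then stdScalar A p q else 0 := by
  have h1 := add_mem_Icc le_rfl (by omega : k + 1 ≤ n)
  have h2 := add_mem_Icc one_le_two hn
  split_ifs with hab
  · rw [hA.toBilin'_pointVec_pointVec_eq p q ha hb h1 h1 (iff_of_true hab rfl), stdScalar]
    ring
  · rw [hA.toBilin'_pointVec_pointVec_eq p q ha hb h1 h2 (iff_of_false hab (by omega)), add_zero]

theorem IsInvariant.toBilin'_stdVec_stdVec (hA : IsInvariant k n A) (hn : k + 2 ≤ n)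
    (p q : ↥(Icc 1 k) ⊕ Unit) (y z : ℕ → ℝ) (hz : ∑ a ∈ Icc (k + 1) n, z a = 0) :
    toBilin' A (stdVec k n p y) (stdVec k n q z)
      = stdScalar A p q * ∑ a ∈ Icc (k + 1) n, y a * z a := by
  have hrow : ∀ a ∈ Icc (k + 1) n,
      ∑ b ∈ Icc (k + 1) n, z b * toBilin' A (pointVec k n p a) (pointVec k n q b)
        = stdScalar A p q * z a := fun a ha => by
    rw [sum_congr rfl fun b hb => by rw [hA.toBilin'_pointVec_pointVec hn p q ha hb]]
    simp only [mul_add, sum_add_distrib, ← sum_mul, hz, zero_mul, zero_add, mul_ite, mul_zero,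
      sum_ite_eq, if_pos ha, mul_comm]
  calc toBilin' A (stdVec k n p y) (stdVec k n q z)
      = ∑ a ∈ Icc (k + 1) n, y a *
          ∑ b ∈ Icc (k + 1) n, z b * toBilin' A (pointVec k n p a) (pointVec k n q b) := by
        simp only [stdVec, map_sum, map_smul, LinearMap.sum_apply, LinearMap.smul_apply,
          smul_eq_mul, mul_sum]
        rw [sum_comm]
        exact sum_congr rfl fun _ _ => sum_congr rfl fun _ _ => by ring
    _ = stdScalar A p q * ∑ a ∈ Icc (k + 1) n, y a * z a := by
        rw [sum_congr rfl fun a ha => by rw [hrow a ha], mul_sum]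
        exact sum_congr rfl fun a _ => by ring

/-- The scalar by which `A` acts on the Johnson vectors of zero degree. -/
noncomputable def johnsonScalar (k : ℕ) (A : Matrix (edgesN n) (edgesN n) ℝ) : ℝ :=
  toBilin' A (vN n {k + 1, k + 2}) (vN n {k + 1, k + 2})
    - 2 * toBilin' A (vN n {k + 1, k + 2}) (vN n {k + 1, k + 3})
    + toBilin' A (vN n {k + 1, k + 2}) (vN n {k + 3, k + 4})

theorem IsInvariant.toBilin'_johnsonVec_johnsonVec (hA : IsInvariant k n A) (hn : k + 4 ≤ n)
    (c : Finset ℕ → ℝ) {c' : Finset ℕ → ℝ} (hc' : ∀ x ∈ Icc (k + 1) n, degree k n c' x = 0) :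
    toBilin' A (johnsonVec k n c) (johnsonVec k n c')
      = johnsonScalar k A * ∑ e ∈ johnsonEdges k n, c e * c' e := by
  have hrow : ∀ e ∈ johnsonEdges k n,
      toBilin' A (vN n e) (johnsonVec k n c') = johnsonScalar k A * c' e := by
    intro e he
    obtain ⟨a, ha, b, hb, hab, rfl⟩ := exists_eq_pair he
    simp only [johnsonVec, map_sum, map_smul, smul_eq_mul]
    rw [sum_congr rfl fun f hf => by rw [hA.toBilin'_vN_pair_vN hn ha hb hab hf, mul_comm]]
    exact sum_johnsonEdges_row ha hb hab hc' _ _ _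
  rw [johnsonVec, map_sum, LinearMap.sum_apply, mul_sum]
  refine sum_congr rfl fun e he => ?_
  rw [map_smul, LinearMap.smul_apply, hrow e he, smul_eq_mul]
  ring

theorem U2_col (hn : k + 2 ≤ n) (p : ↥(Icc 1 k) ⊕ Unit) :
    (U2 k n).col p = pointVec k n p (k + 1) - pointVec k n p (k + 2) := by
  rcases p with j | _
  · rfl
  · have herase : ∀ a b, a ∈ Icc (k + 1) n → b ∈ Icc (k + 1) n → a ≠ b → a < k + 3 → b < k + 3 →
        (Icc (k + 1) n).erase a = insert b (Icc (k + 3) n) := by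
      intro a b ha hb hab ha3 hb3
      ext x
      simp only [mem_erase, mem_insert, mem_Icc] at ha hb ⊢
      omega
    have h1 := add_mem_Icc le_rfl (by omega : k + 1 ≤ n)
    have h2 := add_mem_Icc one_le_two hn
    rw [pointVec, pointVec, johnsonVec_mem_eq_sum h1, johnsonVec_mem_eq_sum h2,
      herase (k + 1) (k + 2) h1 h2 (by omega) (by omega) (by omega),
      herase (k + 2) (k + 1) h2 h1 (by omega) (by omega) (by omega),
      sum_insert (by simp), sum_insert (by simp), pair_comm (k + 2) (k + 1),
      add_sub_add_left_eq_sub, ← sum_sub_distrib]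
    ext g
    simp only [col, transpose_apply, U2, of_apply, Finset.sum_apply, Pi.sub_apply]

theorem IsInvariant.U2_block (hA : IsInvariant k n A) (hn : k + 2 ≤ n) (p q : ↥(Icc 1 k) ⊕ Unit) :
    ((U2 k n)ᵀ * A * U2 k n) p q = 2 * stdScalar A p q := by
  have h1 := add_mem_Icc le_rfl (by omega : k + 1 ≤ n)
  have h2 := add_mem_Icc one_le_two hn
  rw [transpose_mul_mul_apply_eq_toBilin', U2_col hn, U2_col hn]
  simp only [map_sub, LinearMap.sub_apply]
  rw [hA.toBilin'_pointVec_pointVec hn p q h2 h2,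
    hA.toBilin'_pointVec_pointVec hn p q h2 h1, hA.toBilin'_pointVec_pointVec hn p q h1 h1,
    if_pos rfl, if_pos rfl, if_neg (by omega)]
  ring

theorem IsInvariant.toBilin'_sum_stdVec_nonneg (hA : IsInvariant k n A) (hn : k + 2 ≤ n)
    (h2 : ((U2 k n)ᵀ * A * U2 k n).PosSemidef) (y : ↥(Icc 1 k) ⊕ Unit → ℕ → ℝ)
    (hy : ∀ p, ∑ a ∈ Icc (k + 1) n, y p a = 0) :
    0 ≤ toBilin' A (∑ p, stdVec k n p (y p)) (∑ q, stdVec k n q (y q)) := by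
  set M := (U2 k n)ᵀ * A * U2 k n
  calc 0 ≤ ∑ a ∈ Icc (k + 1) n, toBilin' M (fun p => y p a) (fun p => y p a) / 2 :=
        sum_nonneg fun a _ => div_nonneg (h2.toBilin'_self_nonneg _) zero_le_two
    _ = ∑ p, ∑ q, stdScalar A p q * ∑ a ∈ Icc (k + 1) n, y p a * y q a := by
        simp only [toBilin'_apply, M, hA.U2_block hn, sum_div, mul_sum]
        rw [sum_comm]
        refine sum_congr rfl fun p _ => ?_
        rw [sum_comm]
        exact sum_congr rfl fun q _ => sum_congr rfl fun a _ => by ring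
    _ = _ := by
        simp only [map_sum, LinearMap.sum_apply, hA.toBilin'_stdVec_stdVec hn _ _ _ _ (hy _)]
        rw [sum_comm]

def cycleCoeff (k : ℕ) (e : Finset ℕ) : ℝ :=
  (if e = {k + 1, k + 2} then 1 else 0) - (if e = {k + 1, k + 3} then 1 else 0)
    - (if e = {k + 2, k + 4} then 1 else 0) + (if e = {k + 3, k + 4} then 1 else 0)

theorem cycle_edges_mem (hn : k + 4 ≤ n) :
    {k + 1, k + 2} ∈ johnsonEdges k n ∧ {k + 1, k + 3} ∈ johnsonEdges k n
      ∧ {k + 2, k + 4} ∈ johnsonEdges k n ∧ {k + 3, k + 4} ∈ johnsonEdges k n := by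
  refine ⟨?_, ?_, ?_, ?_⟩ <;>
    exact pair_mem_johnsonEdges (add_mem_Icc (by omega) (by omega))
      (add_mem_Icc (by omega) (by omega)) (by omega)

theorem U3_col (hn : k + 4 ≤ n) : (U3 k n).col () = johnsonVec k n (cycleCoeff k) := by
  obtain ⟨h12, h13, h24, h34⟩ := cycle_edges_mem hn
  ext g
  rw [johnsonVec_apply]
  split_ifs with hg
  · rfl
  · have hne : ∀ e ∈ johnsonEdges k n, g.1 ≠ e := fun e he h => hg (h ▸ he)
    simp [col, U3, vN, hne _ h12, hne _ h13, hne _ h24, hne _ h34]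

theorem degree_cycleCoeff (hn : k + 4 ≤ n) (a : ℕ) : degree k n (cycleCoeff k) a = 0 := by
  obtain ⟨h12, h13, h24, h34⟩ := cycle_edges_mem hn
  simp only [degree, cycleCoeff, sum_add_distrib, sum_sub_distrib, sum_ite_eq', mem_filter, h12,
    h13, h24, h34, true_and, mem_insert, mem_singleton]
  split_ifs <;> norm_num <;> omega

theorem sum_cycleCoeff_mul_self (hn : k + 4 ≤ n) :
    ∑ e ∈ johnsonEdges k n, cycleCoeff k e * cycleCoeff k e = 4 := by
  obtain ⟨h12, h13, h24, h34⟩ := cycle_edges_mem hn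
  conv_lhs => enter [2, e, 1]; rw [cycleCoeff]
  simp only [sub_mul, add_mul, ite_mul, one_mul, zero_mul, sum_add_distrib, sum_sub_distrib,
    sum_ite_eq', h12, h13, h24, h34, if_true]
  norm_num [cycleCoeff, pair_eq_pair_iff]

theorem IsInvariant.U3_block (hA : IsInvariant k n A) (hn : k + 4 ≤ n) :
    ((U3 k n)ᵀ * A * U3 k n) () () = 4 * johnsonScalar k A := by
  rw [transpose_mul_mul_apply_eq_toBilin', U3_col hn,
    hA.toBilin'_johnsonVec_johnsonVec hn _ fun a _ => degree_cycleCoeff hn a,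
    sum_cycleCoeff_mul_self hn, mul_comm]

theorem IsInvariant.toBilin'_johnsonVec_self_nonneg (hA : IsInvariant k n A) (hn : k + 4 ≤ n)
    (h3 : ((U3 k n)ᵀ * A * U3 k n).PosSemidef) {w : Finset ℕ → ℝ}
    (hw : ∀ a ∈ Icc (k + 1) n, degree k n w a = 0) :
    0 ≤ toBilin' A (johnsonVec k n w) (johnsonVec k n w) := by
  have hκ : 0 ≤ johnsonScalar k A := by
    have h := h3.diag_nonneg (i := ())
    rw [hA.U3_block hn] at h
    linarith
  rw [hA.toBilin'_johnsonVec_johnsonVec hn w hw]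
  exact mul_nonneg hκ (sum_nonneg fun e _ => mul_self_nonneg _)

theorem U1_mulVec (c : ↥(edgesN k) ⊕ ↥(Icc 1 k) ⊕ Unit → ℝ) :
    U1 k n *ᵥ c = ∑ e : edgesN k, c (.inl e) • vN n e
      + ∑ j : Icc 1 k, c (.inr (.inl j)) • ∑ a ∈ Icc (k + 1) n, vN n {j.1, a}
      + c (.inr (.inr ())) • johnsonVec k n 1 := by
  ext g
  simp [mulVec, dotProduct, Fintype.sum_sum_type, U1, johnsonVec, johnsonEdges, Finset.sum_apply,
    mul_comm, add_assoc]

theorem sum_mul_mem_pair (y : ℕ → ℝ) {a c : ℕ} (ha : a ∈ Icc (k + 1) n)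
    (hc : c ∈ Icc (k + 1) n) (hac : a ≠ c) :
    ∑ b ∈ Icc (k + 1) n, y b * (if b ∈ ({a, c} : Finset ℕ) then 1 else 0) = y a + y c := by
  simp only [mul_ite, mul_one, mul_zero, ← sum_filter, filter_mem_eq_inter,
    inter_eq_right.2 (insert_subset ha (singleton_subset_iff.2 hc)), sum_pair hac]

theorem degree_sub_sub_sum (X : Finset ℕ → ℝ) (μ : ℝ) {y : ℕ → ℝ}
    (hy : ∑ b ∈ Icc (k + 1) n, y b = 0) {a : ℕ} (ha : a ∈ Icc (k + 1) n) :
    degree k n (fun e => X e - μ - ∑ b ∈ Icc (k + 1) n, y b * (if b ∈ e then 1 else 0)) a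
      = degree k n X a - ((#(Icc (k + 1) n) : ℝ) - 1) * μ
        - ((#(Icc (k + 1) n) : ℝ) - 2) * y a := by
  have hcard : (#((Icc (k + 1) n).erase a) : ℝ) = #(Icc (k + 1) n) - 1 := by
    rw [card_erase_of_mem ha, Nat.cast_pred (card_pos.2 ⟨a, ha⟩)]
  have hrest : ∑ c ∈ (Icc (k + 1) n).erase a, y c = - y a := by
    linarith [add_sum_erase _ y ha]
  have hpair : ∀ c ∈ (Icc (k + 1) n).erase a,
      X {a, c} - μ - ∑ b ∈ Icc (k + 1) n, y b * (if b ∈ ({a, c} : Finset ℕ) then 1 else 0)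
        = X {a, c} - μ - (y a + y c) := fun c hc => by
    rw [mem_erase] at hc
    rw [sum_mul_mem_pair y ha hc.2 hc.1.symm]
  rw [degree, sum_filter_mem_johnsonEdges ha, sum_congr rfl hpair, sum_sub_distrib,
    sum_sub_distrib, sum_add_distrib, ← sum_filter_mem_johnsonEdges ha, sum_const, sum_const,
    nsmul_eq_mul, nsmul_eq_mul, hcard, hrest]
  rw [show ∑ e ∈ johnsonEdges k n with a ∈ e, X e = degree k n X a from rfl]
  ring

theorem exists_johnsonVec_decomposition (hn : k + 3 ≤ n) (X : Finset ℕ → ℝ) :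
    ∃ (μ : ℝ) (y : ℕ → ℝ) (w : Finset ℕ → ℝ), ∑ a ∈ Icc (k + 1) n, y a = 0
      ∧ (∀ a ∈ Icc (k + 1) n, degree k n w a = 0)
      ∧ johnsonVec k n X = μ • johnsonVec k n 1 + stdVec k n (.inr ()) y + johnsonVec k n w := by
  set m : ℝ := ↑(#(Icc (k + 1) n)) with hm_def
  have hm : (3 : ℝ) ≤ m := by
    rw [hm_def, Nat.card_Icc]
    exact_mod_cast (by omega : 3 ≤ n + 1 - (k + 1))
  have hm0 : m ≠ 0 := by linarith
  have hm1 : m - 1 ≠ 0 := by linarith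
  have hm2 : m - 2 ≠ 0 := by linarith
  -- `μ` is the mean of `X`, and `y` solves the degree equations of `w`: at `a`, the constant `μ`
  -- has degree `(m - 1) * μ` and `e ↦ ∑_{b ∈ e} y b` has degree `(m - 2) * y a + ∑ y`.
  set μ := 2 * (∑ e ∈ johnsonEdges k n, X e) / (m * (m - 1))
  set y : ℕ → ℝ := fun a => (degree k n X a - (m - 1) * μ) / (m - 2)
  set w : Finset ℕ → ℝ := fun e =>
    X e - μ - ∑ b ∈ Icc (k + 1) n, y b * (if b ∈ e then 1 else 0)
  have hy : ∑ a ∈ Icc (k + 1) n, y a = 0 := by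
    simp only [y, ← sum_div, sum_sub_distrib, sum_degree, sum_const, nsmul_eq_mul, ← hm_def, μ]
    field_simp
    ring
  refine ⟨μ, y, w, hy, fun a ha => ?_, ?_⟩
  · rw [degree_sub_sub_sum X μ hy ha, ← hm_def]
    simp only [y]
    field_simp
    ring
  · ext g
    simp only [johnsonVec_apply, stdVec, pointVec, Pi.add_apply, Pi.smul_apply, smul_eq_mul,
      Finset.sum_apply, w]
    split_ifs <;> simp [mul_ite]

theorem exists_decomposition (hn : k + 3 ≤ n) (x : edgesN n → ℝ) :
    ∃ (c : ↥(edgesN k) ⊕ ↥(Icc 1 k) ⊕ Unit → ℝ) (y : ↥(Icc 1 k) ⊕ Unit → ℕ → ℝ)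
      (w : Finset ℕ → ℝ), (∀ p, ∑ a ∈ Icc (k + 1) n, y p a = 0)
      ∧ (∀ a ∈ Icc (k + 1) n, degree k n w a = 0)
      ∧ x = U1 k n *ᵥ c + ∑ p, stdVec k n p (y p) + johnsonVec k n w := by
  obtain ⟨μ, yJ, w, hyJ, hw, hJ⟩ := exists_johnsonVec_decomposition hn (coord x)
  set μM : ℕ → ℝ := fun j => (∑ a ∈ Icc (k + 1) n, coord x {j, a}) / #(Icc (k + 1) n)
  have hcard : (#(Icc (k + 1) n) : ℝ) ≠ 0 := by
    rw [Nat.cast_ne_zero, Nat.card_Icc]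
    omega
  refine ⟨Sum.elim (fun e => coord x e) (Sum.elim (fun j => μM j) fun _ => μ),
    Sum.elim (fun j a => coord x {j.1, a} - μM j) fun _ => yJ, w, ?_, hw, ?_⟩
  · rintro (j | _)
    · simp only [Sum.elim_inl, sum_sub_distrib, sum_const, nsmul_eq_mul, μM]
      field_simp
      ring
    · exact hyJ
  · have hmixed : ∀ j : Icc 1 k, ∑ a ∈ Icc (k + 1) n, coord x {j.1, a} • vN n {j.1, a}
        = μM j • ∑ a ∈ Icc (k + 1) n, vN n {j.1, a}
          + stdVec k n (.inl j) (fun a => coord x {j.1, a} - μM j) := by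
      intro j
      simp only [stdVec, pointVec, smul_sum, ← sum_add_distrib, ← add_smul, add_sub_cancel]
    conv_lhs => rw [← sum_coord_smul_vN x, sum_edgesN_eq (k := k) (by omega)]
    rw [show ∑ e ∈ johnsonEdges k n, coord x e • vN n e = johnsonVec k n (coord x) from rfl, hJ,
      U1_mulVec, Fintype.sum_sum_type, ← sum_coe_sort (edgesN k), ← sum_coe_sort (Icc 1 k)]
    simp only [hmixed, sum_add_distrib, Sum.elim_inl, Sum.elim_inr, Fintype.sum_unique]
    abel

theorem IsInvariant.toBilin'_decomposition (hA : IsInvariant k n A) (hsym : A.IsSymm)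
    (c : ↥(edgesN k) ⊕ ↥(Icc 1 k) ⊕ Unit → ℝ) {y : ↥(Icc 1 k) ⊕ Unit → ℕ → ℝ}
    (hy : ∀ p, ∑ a ∈ Icc (k + 1) n, y p a = 0) {w : Finset ℕ → ℝ}
    (hw : ∀ a ∈ Icc (k + 1) n, degree k n w a = 0) :
    toBilin' A (U1 k n *ᵥ c + ∑ p, stdVec k n p (y p) + johnsonVec k n w)
        (U1 k n *ᵥ c + ∑ p, stdVec k n p (y p) + johnsonVec k n w)
      = toBilin' ((U1 k n)ᵀ * A * U1 k n) c c
        + toBilin' A (∑ p, stdVec k n p (y p)) (∑ p, stdVec k n p (y p))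
        + toBilin' A (johnsonVec k n w) (johnsonVec k n w) := by
  have hc : ∀ σ, FixPerm n k σ → (U1 k n *ᵥ c) ∘ permEdge n σ = U1 k n *ᵥ c :=
    fun σ hσ => U1_mulVec_comp_permEdge hσ c
  rw [toBilin'_add_add_self_of_isSymm hsym ?_
    (hA.toBilin'_johnsonVec_eq_zero hc (sum_eq_zero_of_degree_eq_zero hw)) ?_,
    toBilin'_mulVec_mulVec]
  · rw [map_sum]
    exact sum_eq_zero fun p _ => hA.toBilin'_stdVec_eq_zero hc p (hy p)
  · rw [map_sum, LinearMap.sum_apply]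
    exact sum_eq_zero fun p _ => hA.toBilin'_stdVec_johnsonVec p (y p) hw

end EdgeMatrix

/-- **Block-diagonalization criterion:** a symmetric `S_{n-k}`-invariant matrix `A`
indexed by the edges of `[n]` (`n ≥ k+4`) is positive semidefinite iff the three
matrices `Uᵢᵀ A Uᵢ`, `i = 1,2,3`, are positive semidefinite. -/
theorem PSD_iff_blocks_PSD (k n : ℕ) (hn : k + 4 ≤ n)
    (A : Matrix ↥(edgesN n) ↥(edgesN n) ℝ) (hsym : A.IsSymm)
    (hinv : ∀ σ : Equiv.Perm ℕ, FixPerm n k σ →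
      ∀ e f : ↥(edgesN n), A (permEdge n σ e) (permEdge n σ f) = A e f) :
    A.PosSemidef ↔
      ((U1 k n)ᵀ * A * U1 k n).PosSemidef
        ∧ ((U2 k n)ᵀ * A * U2 k n).PosSemidef
        ∧ ((U3 k n)ᵀ * A * U3 k n).PosSemidef := by
  refine ⟨fun hpsd => ⟨hpsd.transpose_mul_mul_same _, hpsd.transpose_mul_mul_same _,
    hpsd.transpose_mul_mul_same _⟩, fun ⟨h1, h2, h3⟩ => posSemidef_of_toBilin'_nonneg hsym ?_⟩
  have hA : EdgeMatrix.IsInvariant k n A := hinv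
  intro x
  obtain ⟨c, y, w, hy, hw, rfl⟩ := EdgeMatrix.exists_decomposition (k := k) (by omega) x
  rw [hA.toBilin'_decomposition hsym c hy hw]
  exact add_nonneg (add_nonneg (h1.toBilin'_self_nonneg c)
    (hA.toBilin'_sum_stdVec_nonneg (by omega) h2 y hy))
    (hA.toBilin'_johnsonVec_self_nonneg hn h3 hw)
end
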